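/- arXiv:math/0404401 — 6 statements merged into one kernel-verified Lean document; each statement's English description precedes it below -/
import Mathlib

section
/- A kernel N on a set X is negative definite if and only if for every t > 0 the kernel e^{-tN} is positive definite. -/
open Filter MeasureTheory

def IsPosDefKernel {X : Type*} (K : X → X → ℝ) : Prop :=
  (∀ x y, K x y = K y x) ∧
  ∀ (n : ℕ) (x : Fin n → X) (c : Fin n → ℝ),
    0 ≤ ∑ i, ∑ j, K (x i) (x j) * c i * c j

def IsNegDefKernel {X : Type*} (N : X → X → ℝ) : Prop :=
  (∀ x y, N x y = N y x) ∧
  ∀ (n : ℕ) (x : Fin n → X) (c : Fin n → ℝ), (∑ i, c i) = 0 →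
    ∑ i, ∑ j, N (x i) (x j) * c i * c j ≤ 0

def IsCoarseEmbedding {X Y : Type*} [PseudoMetricSpace X] [PseudoMetricSpace Y]
    (f : X → Y) : Prop :=
  ∃ ρ₁ ρ₂ : ℝ → ℝ, MonotoneOn ρ₁ (Set.Ici 0) ∧ MonotoneOn ρ₂ (Set.Ici 0) ∧
    (∀ x y, ρ₁ (dist x y) ≤ dist (f x) (f y) ∧ dist (f x) (f y) ≤ ρ₂ (dist x y)) ∧
    Tendsto ρ₁ atTop atTop


lemma dsum_factor {m : ℕ} (u v : Fin m → ℝ) :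
    ∑ i, ∑ j, u i * v j = (∑ i, u i) * (∑ j, v j) := by
  rw [Finset.sum_mul_sum]

lemma exists_gram {m : ℕ} (M : Matrix (Fin m) (Fin m) ℝ)
    (hs : ∀ i j, M i j = M j i)
    (h : ∀ c : Fin m → ℝ, 0 ≤ ∑ i, ∑ j, M i j * c i * c j) :
    ∃ B : Matrix (Fin m) (Fin m) ℝ, ∀ i j, M i j = ∑ k, B k i * B k j := by
  have hps : M.PosSemidef := by
    refine Matrix.posSemidef_iff_dotProduct_mulVec.mpr ⟨Matrix.IsHermitian.ext fun i j => by simpa using hs j i, fun v => ?_⟩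
    calc (0:ℝ) ≤ ∑ i, ∑ j, M i j * v i * v j := h v
      _ = dotProduct (star v) (M.mulVec v) := by
        simp only [dotProduct, Matrix.mulVec, Pi.star_apply, star_trivial,
          Finset.mul_sum]
        exact Finset.sum_congr rfl fun i _ => Finset.sum_congr rfl fun j _ => by ring
  obtain ⟨B, hB⟩ : ∃ B : Matrix (Fin m) (Fin m) ℝ, M = B.conjTranspose * B := by
    open scoped MatrixOrder in
    exact CStarAlgebra.nonneg_iff_eq_star_mul_self.mp hps.nonneg
  refine ⟨B, fun i j => ?_⟩
  rw [hB]
  simp [Matrix.mul_apply, Matrix.conjTranspose_apply]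

lemma schur_form {m : ℕ} (B : Matrix (Fin m) (Fin m) ℝ) (L : Matrix (Fin m) (Fin m) ℝ)
    (hL : ∀ c : Fin m → ℝ, 0 ≤ ∑ i, ∑ j, L i j * c i * c j) (c : Fin m → ℝ) :
    0 ≤ ∑ i, ∑ j, (∑ k, B k i * B k j) * L i j * c i * c j := by
  have e1 : ∀ i j, (∑ k, B k i * B k j) * L i j * c i * c j
      = ∑ k, L i j * (c i * B k i) * (c j * B k j) := by
    intro i j
    rw [Finset.sum_mul, Finset.sum_mul, Finset.sum_mul]
    exact Finset.sum_congr rfl fun k _ => by ring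
  have key : ∑ i, ∑ j, (∑ k, B k i * B k j) * L i j * c i * c j
      = ∑ k, ∑ i, ∑ j, L i j * (c i * B k i) * (c j * B k j) :=
    calc ∑ i, ∑ j, (∑ k, B k i * B k j) * L i j * c i * c j
        = ∑ i, ∑ j, ∑ k, L i j * (c i * B k i) * (c j * B k j) :=
          Finset.sum_congr rfl fun i _ => Finset.sum_congr rfl fun j _ => e1 i j
      _ = ∑ i, ∑ k, ∑ j, L i j * (c i * B k i) * (c j * B k j) :=
          Finset.sum_congr rfl fun i _ => Finset.sum_comm
      _ = ∑ k, ∑ i, ∑ j, L i j * (c i * B k i) * (c j * B k j) := Finset.sum_comm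
  rw [key]
  exact Finset.sum_nonneg fun k _ => hL fun i => c i * B k i

lemma pow_form_nonneg {m : ℕ} (M : Matrix (Fin m) (Fin m) ℝ)
    (hs : ∀ i j, M i j = M j i)
    (h : ∀ c : Fin m → ℝ, 0 ≤ ∑ i, ∑ j, M i j * c i * c j) (n : ℕ) :
    ∀ c : Fin m → ℝ, 0 ≤ ∑ i, ∑ j, (M i j) ^ n * c i * c j := by
  induction n with
  | zero =>
    intro c
    simp only [pow_zero, one_mul]
    rw [← Finset.sum_mul_sum]
    exact mul_self_nonneg _
  | succ n ih =>
    intro c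
    obtain ⟨B, hB⟩ := exists_gram M hs h
    have key := schur_form B (fun i j => (M i j) ^ n) ih c
    have heq : ∑ i, ∑ j, (∑ k, B k i * B k j) * (fun i j => (M i j) ^ n) i j * c i * c j
        = ∑ i, ∑ j, (M i j) ^ (n+1) * c i * c j :=
      Finset.sum_congr rfl fun i _ => Finset.sum_congr rfl fun j _ => by
        simp only [← hB i j]; ring
    rw [heq] at key
    exact key

lemma exp_form_nonneg {m : ℕ} (M : Matrix (Fin m) (Fin m) ℝ)
    (hs : ∀ i j, M i j = M j i)
    (h : ∀ c : Fin m → ℝ, 0 ≤ ∑ i, ∑ j, M i j * c i * c j) (c : Fin m → ℝ) :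
    0 ≤ ∑ i, ∑ j, Real.exp (M i j) * c i * c j := by
  have hsum : ∀ (i j : Fin m),
      Summable (fun n : ℕ => (M i j) ^ n / n.factorial * c i * c j) :=
    fun i j => ((Real.summable_pow_div_factorial _).mul_right _).mul_right _
  have hexp : ∀ i j : Fin m, (∑' n : ℕ, (M i j) ^ n / n.factorial * c i * c j)
      = Real.exp (M i j) * c i * c j := by
    intro i j
    rw [tsum_mul_right, tsum_mul_right]
    congr 2
    simp only [Real.exp_eq_exp_ℝ, NormedSpace.exp_eq_tsum_div]
  calc (0:ℝ) ≤ ∑' n : ℕ, ∑ i, ∑ j, (M i j) ^ n / n.factorial * c i * c j := by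
        refine tsum_nonneg fun n => ?_
        have e : ∑ i, ∑ j, (M i j) ^ n / n.factorial * c i * c j
            = (∑ i, ∑ j, (M i j) ^ n * c i * c j) * ((n.factorial : ℝ))⁻¹ := by
          rw [Finset.sum_mul]
          refine Finset.sum_congr rfl fun i _ => ?_
          rw [Finset.sum_mul]
          exact Finset.sum_congr rfl fun j _ => by ring
        rw [e]
        exact mul_nonneg (pow_form_nonneg M hs h n c) (by positivity)
    _ = ∑ i, ∑ j, ∑' n : ℕ, (M i j) ^ n / n.factorial * c i * c j := by
        rw [Summable.tsum_finsetSum fun i _ => summable_sum fun j _ => hsum i j]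
        exact Finset.sum_congr rfl fun i _ => Summable.tsum_finsetSum fun j _ => hsum i j
    _ = ∑ i, ∑ j, Real.exp (M i j) * c i * c j :=
        Finset.sum_congr rfl fun i _ => Finset.sum_congr rfl fun j _ => hexp i j

theorem negDef_iff_exp_posDef {X : Type*} (N : X → X → ℝ) (hsym : ∀ x y, N x y = N y x) :
    IsNegDefKernel N ↔
      ∀ t : ℝ, 0 < t → IsPosDefKernel (fun x y => Real.exp (-t * N x y)) := by
  constructor
  · rintro ⟨-, hneg⟩ t ht
    refine ⟨fun x y => by simp only [hsym x y], ?_⟩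
    intro m x c
    rcases Nat.eq_zero_or_pos m with hm | hm
    · subst hm; simp
    · set x₀ : X := x ⟨0, hm⟩ with hx₀
      set a : Fin m → ℝ := fun i => N (x i) x₀ with ha
      set M : Matrix (Fin m) (Fin m) ℝ :=
        fun i j => t * (a i + a j - N (x i) (x j) - N x₀ x₀) with hM
      have hMs : ∀ i j, M i j = M j i := fun i j => by
        simp only [hM]; rw [hsym (x i) (x j)]; ring
      have hMform : ∀ d : Fin m → ℝ, 0 ≤ ∑ i, ∑ j, M i j * d i * d j := by
        intro d
        set S : ℝ := ∑ i, d i with hS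
        clear_value S
        set y : Fin (m+1) → X := Fin.cons x₀ x with hy
        set e : Fin (m+1) → ℝ := Fin.cons (-S) d with he
        clear_value y e
        have hE := hneg (m + 1) y e
          (by rw [he, Fin.sum_univ_succ, Fin.cons_zero]
              simp only [Fin.cons_succ]
              rw [← hS]; ring)
        have hEeq : ∑ i : Fin (m+1), ∑ j : Fin (m+1),
            N (y i) (y j) * e i * e j
            = N x₀ x₀ * (S * S) - S * (∑ j, a j * d j)
              - (∑ i, a i * d i) * S + ∑ i, ∑ j, N (x i) (x j) * d i * d j := by
          rw [Fin.sum_univ_succ]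
          simp only [hy, he, Fin.cons_zero, Fin.cons_succ]
          rw [Fin.sum_univ_succ]
          simp only [Fin.cons_zero, Fin.cons_succ]
          have e1 : ∀ i : Fin m, (∑ j : Fin (m+1),
              N (x i) ((Fin.cons x₀ x : Fin (m+1) → X) j) * d i * (Fin.cons (-S) d : Fin (m+1) → ℝ) j)
              = -(a i * d i * S) + ∑ j, N (x i) (x j) * d i * d j := by
            intro i
            rw [Fin.sum_univ_succ]
            simp only [Fin.cons_zero, Fin.cons_succ, ha]
            ring
          have e1' : ∑ i : Fin m, (∑ j : Fin (m+1),
              N (x i) ((Fin.cons x₀ x : Fin (m+1) → X) j) * d i * (Fin.cons (-S) d : Fin (m+1) → ℝ) j)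
              = ∑ i : Fin m, (-(a i * d i * S) + ∑ j, N (x i) (x j) * d i * d j) :=
            Finset.sum_congr rfl fun i _ => e1 i
          rw [e1']
          rw [Finset.sum_add_distrib]
          have e2 : ∑ j, N x₀ (x j) * -S * d j = -(S * ∑ j, a j * d j) := by
            rw [Finset.mul_sum, ← Finset.sum_neg_distrib]
            refine Finset.sum_congr rfl fun j _ => ?_
            simp only [ha]; rw [hsym x₀ (x j)]; ring
          have e3 : ∑ i, -(a i * d i * S) = -((∑ i, a i * d i) * S) := by
            rw [Finset.sum_mul, Finset.sum_neg_distrib]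
          rw [e2, e3]
          ring
        rw [hEeq] at hE
        have hgoal : ∑ i, ∑ j, M i j * d i * d j
            = t * ((∑ i, a i * d i) * S + S * (∑ j, a j * d j)
              - (∑ i, ∑ j, N (x i) (x j) * d i * d j) - N x₀ x₀ * (S * S)) := by
          have e0 : ∀ (i j : Fin m), M i j * d i * d j
              = t * ((a i * d i) * d j + d i * (a j * d j)
                - N (x i) (x j) * d i * d j - (N x₀ x₀ * d i) * d j) := by
            intro i j; simp only [hM]; ring
          calc ∑ i, ∑ j, M i j * d i * d j
              = ∑ i, ∑ j, t * ((a i * d i) * d j + d i * (a j * d j)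
                - N (x i) (x j) * d i * d j - (N x₀ x₀ * d i) * d j) :=
                Finset.sum_congr rfl fun i _ => Finset.sum_congr rfl fun j _ => e0 i j
            _ = t * ∑ i, ∑ j, ((a i * d i) * d j + d i * (a j * d j)
                - N (x i) (x j) * d i * d j - (N x₀ x₀ * d i) * d j) := by
                rw [Finset.mul_sum]
                exact Finset.sum_congr rfl fun i _ => (Finset.mul_sum _ _ _).symm
            _ = t * ((∑ i, ∑ j, (a i * d i) * d j) + (∑ i, ∑ j, d i * (a j * d j))
                - (∑ i, ∑ j, N (x i) (x j) * d i * d j)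
                - (∑ i, ∑ j, (N x₀ x₀ * d i) * d j)) := by
                congr 1
                simp only [Finset.sum_sub_distrib, Finset.sum_add_distrib]
            _ = t * ((∑ i, a i * d i) * S + S * (∑ j, a j * d j)
                - (∑ i, ∑ j, N (x i) (x j) * d i * d j) - N x₀ x₀ * (S * S)) := by
                rw [dsum_factor (fun i => a i * d i) d,
                  dsum_factor d (fun j => a j * d j),
                  dsum_factor (fun i => N x₀ x₀ * d i) d, ← Finset.mul_sum]
                rw [← hS]
                ring
        rw [hgoal]
        nlinarith [hE, ht]
      -- final assembly
      set dvec : Fin m → ℝ := fun i => Real.exp (-t * a i) * c i with hd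
      have hterm : ∀ i j, Real.exp (-t * N (x i) (x j)) * c i * c j
          = Real.exp (t * N x₀ x₀) * (Real.exp (M i j) * dvec i * dvec j) := by
        intro i j
        have hexp : Real.exp (-t * N (x i) (x j))
            = Real.exp (t * N x₀ x₀) * Real.exp (M i j)
              * Real.exp (-t * a i) * Real.exp (-t * a j) := by
          rw [← Real.exp_add, ← Real.exp_add, ← Real.exp_add]
          congr 1
          simp only [hM]
          ring
        rw [hexp]
        simp only [hd]
        ring
      calc (0:ℝ) ≤ Real.exp (t * N x₀ x₀) * ∑ i, ∑ j, Real.exp (M i j) * dvec i * dvec j :=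
            mul_nonneg (Real.exp_pos _).le (exp_form_nonneg M hMs hMform dvec)
        _ = ∑ i, ∑ j, Real.exp (-t * N (x i) (x j)) * c i * c j := by
            rw [Finset.mul_sum]
            refine Finset.sum_congr rfl fun i _ => ?_
            rw [Finset.mul_sum]
            exact Finset.sum_congr rfl fun j _ => (hterm i j).symm
  · intro hpd
    refine ⟨hsym, ?_⟩
    intro n x c hc
    set g : ℝ → ℝ := fun t => ∑ i, ∑ j, Real.exp (-t * N (x i) (x j)) * c i * c j with hg
    have hg0 : g 0 = 0 := by
      simp only [hg, neg_zero, zero_mul, Real.exp_zero, one_mul]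
      rw [← Finset.sum_mul_sum, hc, zero_mul]
    have hderiv : HasDerivAt g
        (∑ i, ∑ j, Real.exp (-0 * N (x i) (x j)) * (-N (x i) (x j)) * c i * c j) 0 := by
      refine HasDerivAt.fun_sum fun i _ => ?_
      refine HasDerivAt.fun_sum fun j _ => ?_
      have h1 : HasDerivAt (fun t : ℝ => -t * N (x i) (x j)) (-N (x i) (x j)) 0 := by
        simpa using ((hasDerivAt_id (0:ℝ)).neg.mul_const (N (x i) (x j)))
      exact ((h1.exp).mul_const (c i)).mul_const (c j)
    have hD : (∑ i, ∑ j, Real.exp (-0 * N (x i) (x j)) * (-N (x i) (x j)) * c i * c j)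
        = -∑ i, ∑ j, N (x i) (x j) * c i * c j := by
      simp only [neg_zero, zero_mul, Real.exp_zero, one_mul, neg_mul, mul_neg,
        Finset.sum_neg_distrib]
    rw [hD] at hderiv
    rw [hasDerivAt_iff_tendsto_slope] at hderiv
    have hderiv' := hderiv.mono_left
      (nhdsWithin_mono 0 (fun u (hu : u ∈ Set.Ioi (0:ℝ)) => ne_of_gt hu))
    have hnn : ∀ᶠ u in nhdsWithin 0 (Set.Ioi (0:ℝ)), 0 ≤ slope g 0 u := by
      filter_upwards [self_mem_nhdsWithin] with u hu
      have hu' : (0:ℝ) < u := hu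
      have hgu : 0 ≤ g u := (hpd u hu').2 n x c
      have hslope : slope g 0 u = g u / u := by
        rw [slope_def_field, hg0, sub_zero, sub_zero]
      rw [hslope]
      exact div_nonneg hgu hu'.le
    have := ge_of_tendsto hderiv' hnn
    linarith
end

section
/- If N is a negative definite kernel on X with N(x,y) ≥ 0 for all x, y, then for every 0 < α < 1 the kernel N^α is negative definite. -/
open Filter MeasureTheory

open Set


lemma psd_of {n : ℕ} {A : Matrix (Fin n) (Fin n) ℝ}
    (hsym : ∀ i j, A i j = A j i)
    (h : ∀ c : Fin n → ℝ, 0 ≤ ∑ i, ∑ j, A i j * c i * c j) : A.PosSemidef := by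
  refine Matrix.PosSemidef.of_dotProduct_mulVec_nonneg ?_ ?_
  · ext i j
    simp [Matrix.conjTranspose_apply, hsym i j]
  · intro c
    have := h c
    simp only [dotProduct, Matrix.mulVec, Pi.star_apply, star_trivial]
    calc (0:ℝ) ≤ ∑ i, ∑ j, A i j * c i * c j := h c
    _ = ∑ i, c i * ∑ j, A i j * c j := by
        refine Finset.sum_congr rfl fun i _ => ?_
        rw [Finset.mul_sum]
        exact Finset.sum_congr rfl fun j _ => by ring

lemma qf_of_psd {n : ℕ} {A : Matrix (Fin n) (Fin n) ℝ} (hA : A.PosSemidef)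
    (c : Fin n → ℝ) : 0 ≤ ∑ i, ∑ j, A i j * c i * c j := by
  have := hA.dotProduct_mulVec_nonneg c
  simp only [dotProduct, Matrix.mulVec, Pi.star_apply, star_trivial] at this
  calc (0:ℝ) ≤ ∑ i, c i * ∑ j, A i j * c j := this
  _ = ∑ i, ∑ j, A i j * c i * c j := by
      refine Finset.sum_congr rfl fun i _ => ?_
      rw [Finset.mul_sum]
      exact Finset.sum_congr rfl fun j _ => by ring

lemma psd_hadamard {n : ℕ} {A B : Matrix (Fin n) (Fin n) ℝ}
    (hA : A.PosSemidef) (hB : B.PosSemidef) :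
    (Matrix.of fun i j => A i j * B i j).PosSemidef := by
  obtain ⟨M, hM⟩ : ∃ M : Matrix (Fin n) (Fin n) ℝ, B = Matrix.conjTranspose M * M := by
    open scoped MatrixOrder in exact CStarAlgebra.nonneg_iff_eq_star_mul_self.mp hB.nonneg
  refine psd_of (fun i j => ?_) (fun c => ?_)
  · simp only [Matrix.of_apply]
    rw [← hA.1.apply i j, ← hB.1.apply i j, star_trivial, star_trivial]
  · have hBij : ∀ i j, B i j = ∑ k, M k i * M k j := by
      intro i j
      rw [hM]
      simp [Matrix.mul_apply, Matrix.conjTranspose_apply]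
    calc (0:ℝ) ≤ ∑ k, ∑ i, ∑ j, A i j * (c i * M k i) * (c j * M k j) :=
          Finset.sum_nonneg fun k _ => qf_of_psd hA _
    _ = ∑ i, ∑ j, (Matrix.of fun i j => A i j * B i j) i j * c i * c j := by
        rw [Finset.sum_comm]
        refine Finset.sum_congr rfl fun i _ => ?_
        rw [Finset.sum_comm]
        refine Finset.sum_congr rfl fun j _ => ?_
        simp only [Matrix.of_apply, hBij i j, Finset.mul_sum, Finset.sum_mul]
        exact Finset.sum_congr rfl fun k _ => by ring

lemma psd_pow {n : ℕ} {A : Matrix (Fin n) (Fin n) ℝ} (hA : A.PosSemidef) (k : ℕ) :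
    (Matrix.of fun i j => A i j ^ k).PosSemidef := by
  induction k with
  | zero =>
    refine psd_of (fun i j => by simp) (fun c => ?_)
    have : ∑ i, ∑ j, (Matrix.of fun i j : Fin n => (A i j : ℝ) ^ 0) i j * c i * c j
        = (∑ i, c i) ^ 2 := by
      rw [sq, Finset.sum_mul]
      exact Finset.sum_congr rfl fun i _ => by
        rw [Finset.mul_sum]; exact Finset.sum_congr rfl fun j _ => by simp [mul_comm]
    rw [this]; positivity
  | succ k ih =>
    have h := psd_hadamard hA ih
    have heq : (Matrix.of fun i j => A i j ^ (k+1))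
        = (Matrix.of fun i j => A i j * (Matrix.of fun i j => A i j ^ k) i j) := by
      ext i j; simp [pow_succ]; ring
    rw [heq]; exact h

lemma qf_exp {n : ℕ} {A : Matrix (Fin n) (Fin n) ℝ} (hA : A.PosSemidef)
    (c : Fin n → ℝ) : 0 ≤ ∑ i, ∑ j, Real.exp (A i j) * c i * c j := by
  have hsummand : ∀ i j : Fin n, Summable (fun k : ℕ => A i j ^ k / (Nat.factorial k : ℝ) * c i * c j) := by
    intro i j
    exact ((Real.summable_pow_div_factorial (A i j)).mul_right (c i)).mul_right (c j)
  have hexp : ∀ i j : Fin n, Real.exp (A i j) * c i * c j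
      = ∑' k : ℕ, A i j ^ k / (Nat.factorial k : ℝ) * c i * c j := by
    intro i j
    rw [Real.exp_eq_exp_ℝ, NormedSpace.exp_eq_tsum_div]
    rw [← tsum_mul_right, ← tsum_mul_right]
  calc (0:ℝ) ≤ ∑' k : ℕ, ∑ i, ∑ j, A i j ^ k / (Nat.factorial k : ℝ) * c i * c j := by
        refine tsum_nonneg fun k => ?_
        have h1 : ∑ i, ∑ j, A i j ^ k / (Nat.factorial k : ℝ) * c i * c j
            = (Nat.factorial k : ℝ)⁻¹ * ∑ i, ∑ j, (Matrix.of fun i j => A i j ^ k) i j * c i * c j := by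
          rw [Finset.mul_sum]
          refine Finset.sum_congr rfl fun i _ => ?_
          rw [Finset.mul_sum]
          exact Finset.sum_congr rfl fun j _ => by simp [div_eq_mul_inv]; ring
        rw [h1]
        have := qf_of_psd (psd_pow hA k) c
        positivity
  _ = ∑ i, ∑ j, ∑' k : ℕ, A i j ^ k / (Nat.factorial k : ℝ) * c i * c j := by
        rw [Summable.tsum_finsetSum (fun i _ => summable_sum (fun j _ => hsummand i j))]
        exact Finset.sum_congr rfl fun i _ => Summable.tsum_finsetSum (fun j _ => hsummand i j)
  _ = ∑ i, ∑ j, Real.exp (A i j) * c i * c j := by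
        exact Finset.sum_congr rfl fun i _ => Finset.sum_congr rfl fun j _ => (hexp i j).symm

section
variable {X : Type*} {N : X → X → ℝ}

lemma key_ineq (hN : IsNegDefKernel N) {n : ℕ} (x : Fin n → X) (x₀ : X) (v : Fin n → ℝ) :
    ∑ i, ∑ j, N (x i) (x j) * v i * v j
      ≤ 2 * (∑ i, v i) * (∑ i, N (x i) x₀ * v i) - (∑ i, v i) * (∑ i, v i) * N x₀ x₀ := by
  set a := ∑ i, v i with ha
  set T := ∑ i, N (x i) x₀ * v i with hT
  set y : Fin (n+1) → X := Fin.cons x₀ x with hy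
  set d : Fin (n+1) → ℝ := Fin.cons (-a) v with hd
  have haug := hN.2 (n+1) y d
    (by rw [hd, Fin.sum_univ_succ]; simp [ha])
  rw [Fin.sum_univ_succ] at haug
  have e1 : ∑ j, N (y 0) (y j) * d 0 * d j
      = N x₀ x₀ * a * a + (-a) * T := by
    rw [Fin.sum_univ_succ]
    simp only [hy, hd, Fin.cons_zero, Fin.cons_succ]
    have : ∑ j : Fin n, N x₀ (x j) * -a * v j = ∑ j : Fin n, -a * (N (x j) x₀ * v j) :=
      Finset.sum_congr rfl fun j _ => by rw [hN.1 x₀ (x j)]; ring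
    rw [this, ← Finset.mul_sum, ← hT]
    ring
  have e2 : ∀ i : Fin n, ∑ j, N (y i.succ) (y j) * d i.succ * d j
      = -a * (N (x i) x₀ * v i) + ∑ j, N (x i) (x j) * v i * v j := by
    intro i
    rw [Fin.sum_univ_succ]
    simp only [hy, hd, Fin.cons_zero, Fin.cons_succ]
    congr 1
    ring
  rw [e1, Finset.sum_congr rfl (fun i _ => e2 i), Finset.sum_add_distrib,
    ← Finset.mul_sum, ← hT] at haug
  linarith

lemma qf_exp_neg (hN : IsNegDefKernel N) (n : ℕ) (x : Fin n → X) (c : Fin n → ℝ) :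
    0 ≤ ∑ i, ∑ j, Real.exp (-(N (x i) (x j))) * c i * c j := by
  rcases Nat.eq_zero_or_pos n with hn | hn
  · subst hn; simp
  have i0 : Fin n := ⟨0, hn⟩
  set x₀ := x i0 with hx₀
  set K : Matrix (Fin n) (Fin n) ℝ :=
    Matrix.of fun i j => N (x i) x₀ + N (x j) x₀ - N (x i) (x j) - N x₀ x₀ with hK
  have hKpsd : K.PosSemidef := by
    refine psd_of (fun i j => ?_) (fun v => ?_)
    · simp only [hK, Matrix.of_apply, hN.1 (x i) (x j)]; ring
    · have := key_ineq hN x x₀ v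
      set a := ∑ i, v i
      set T := ∑ i, N (x i) x₀ * v i
      have expand : ∑ i, ∑ j, K i j * v i * v j
          = a * T + T * a - (∑ i, ∑ j, N (x i) (x j) * v i * v j) - N x₀ x₀ * a * a := by
        have inner : ∀ i : Fin n, ∑ j, K i j * v i * v j
            = (N (x i) x₀ * v i) * a + v i * T
              - (∑ j, N (x i) (x j) * v i * v j) - (N x₀ x₀ * v i) * a := by
          intro i
          have step : ∀ j : Fin n, K i j * v i * v j
              = (N (x i) x₀ * v i) * v j + v i * (N (x j) x₀ * v j)
                - N (x i) (x j) * v i * v j - (N x₀ x₀ * v i) * v j := by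
            intro j; simp only [hK, Matrix.of_apply]; ring
          rw [Finset.sum_congr rfl (fun j _ => step j)]
          rw [Finset.sum_sub_distrib, Finset.sum_sub_distrib, Finset.sum_add_distrib,
            ← Finset.mul_sum, ← Finset.mul_sum, ← Finset.mul_sum]
        rw [Finset.sum_congr rfl (fun i _ => inner i)]
        rw [Finset.sum_sub_distrib, Finset.sum_sub_distrib, Finset.sum_add_distrib,
          ← Finset.sum_mul, ← Finset.sum_mul, ← Finset.sum_mul]
        have : ∑ i, N x₀ x₀ * v i = N x₀ x₀ * a := by rw [Finset.mul_sum]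
        rw [this]
        ring
      rw [expand]
      linarith
  have hfact : ∀ i j : Fin n, Real.exp (-(N (x i) (x j))) * c i * c j
      = Real.exp (N x₀ x₀) * (Real.exp (K i j)
        * (c i * Real.exp (-(N (x i) x₀))) * (c j * Real.exp (-(N (x j) x₀)))) := by
    intro i j
    rw [hK]
    simp only [Matrix.of_apply]
    rw [show N (x i) x₀ + N (x j) x₀ - N (x i) (x j) - N x₀ x₀
        = -(N (x i) (x j)) + N (x i) x₀ + N (x j) x₀ - N x₀ x₀ by ring]
    rw [Real.exp_sub, Real.exp_add, Real.exp_add, Real.exp_neg, Real.exp_neg, Real.exp_neg]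
    field_simp
  calc (0:ℝ) ≤ Real.exp (N x₀ x₀) * ∑ i, ∑ j, Real.exp (K i j)
        * (c i * Real.exp (-(N (x i) x₀))) * (c j * Real.exp (-(N (x j) x₀))) := by
        have := qf_exp hKpsd (fun i => c i * Real.exp (-(N (x i) x₀)))
        positivity
  _ = ∑ i, ∑ j, Real.exp (-(N (x i) (x j))) * c i * c j := by
      rw [Finset.mul_sum]
      refine Finset.sum_congr rfl fun i _ => ?_
      rw [Finset.mul_sum]
      exact Finset.sum_congr rfl fun j _ => (hfact i j).symm
end


noncomputable def gfun (α : ℝ) (u : ℝ) : ℝ := (1 - Real.exp (-u)) * u ^ (-1 - α)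

lemma g_contOn (α : ℝ) : ContinuousOn (gfun α) (Ioi 0) := by
  apply ContinuousOn.mul
  · exact (continuous_const.sub (Real.continuous_exp.comp continuous_neg)).continuousOn
  · intro u hu
    exact (Real.continuousAt_rpow_const u _ (Or.inl (ne_of_gt hu))).continuousWithinAt

lemma g_nonneg {α : ℝ} {u : ℝ} (hu : 0 < u) : 0 ≤ gfun α u := by
  apply mul_nonneg
  · simp only [sub_nonneg]
    exact Real.exp_le_one_iff.mpr (by linarith)
  · exact Real.rpow_nonneg hu.le _

lemma g_pos {α : ℝ} {u : ℝ} (hu : 0 < u) : 0 < gfun α u := by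
  apply mul_pos
  · simp only [sub_pos]
    exact Real.exp_lt_one_iff.mpr (by linarith)
  · exact Real.rpow_pos_of_pos hu _

lemma g_integrable {α : ℝ} (h0 : 0 < α) (h1 : α < 1) : IntegrableOn (gfun α) (Ioi 0) := by
  have hsplit : Ioi (0:ℝ) = Ioc 0 1 ∪ Ioi 1 := (Set.Ioc_union_Ioi_eq_Ioi zero_le_one).symm
  rw [hsplit]
  apply IntegrableOn.union
  · -- on Ioc 0 1, dominate by u ^ (-α)
    have hint : IntegrableOn (fun u : ℝ => u ^ (-α)) (Ioc 0 1) := by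
      have := intervalIntegral.intervalIntegrable_rpow' (a := 0) (b := 1) (r := -α)
        (by linarith)
      simpa [intervalIntegrable_iff, uIoc_of_le (zero_le_one (α := ℝ))] using this
    refine Integrable.mono' hint (((g_contOn α).mono Ioc_subset_Ioi_self).aestronglyMeasurable
      measurableSet_Ioc) ?_
    · filter_upwards [ae_restrict_mem measurableSet_Ioc] with u hu
      rcases hu with ⟨hu0, hu1⟩
      rw [Real.norm_of_nonneg (g_nonneg hu0)]
      have h2 : 1 - Real.exp (-u) ≤ u := by
        have := Real.add_one_le_exp (-u)
        linarith
      calc gfun α u ≤ u * u ^ (-1 - α) := by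
            apply mul_le_mul_of_nonneg_right h2 (Real.rpow_nonneg hu0.le _)
      _ = u ^ (-α) := by
            rw [show -α = 1 + (-1 - α) by ring, Real.rpow_add hu0, Real.rpow_one]
  · have hint : IntegrableOn (fun u : ℝ => u ^ (-1-α)) (Ioi 1) :=
      integrableOn_Ioi_rpow_of_lt (by linarith) zero_lt_one
    refine Integrable.mono' hint (((g_contOn α).mono (Ioi_subset_Ioi zero_le_one)).aestronglyMeasurable
      measurableSet_Ioi) ?_
    filter_upwards [ae_restrict_mem measurableSet_Ioi] with u hu
    have hu0 : (0:ℝ) < u := lt_trans zero_lt_one hu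
    rw [Real.norm_of_nonneg (g_nonneg hu0)]
    calc gfun α u ≤ 1 * u ^ (-1-α) := by
          apply mul_le_mul_of_nonneg_right ?_ (Real.rpow_nonneg hu0.le _)
          have : 0 < Real.exp (-u) := Real.exp_pos _
          linarith
    _ = u ^ (-1-α) := one_mul _

noncomputable def Cα (α : ℝ) : ℝ := ∫ u in Ioi (0:ℝ), gfun α u

lemma C_pos {α : ℝ} (h0 : 0 < α) (h1 : α < 1) : 0 < Cα α := by
  rw [Cα, setIntegral_pos_iff_support_of_nonneg_ae]
  · refine lt_of_lt_of_le ?_ (measure_mono (show Ioi (0:ℝ) ⊆ Function.support (gfun α) ∩ Ioi 0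
      from fun u hu => ⟨ne_of_gt (g_pos hu), hu⟩))
    simp [Real.volume_Ioi]
  · filter_upwards [ae_restrict_mem measurableSet_Ioi] with u hu
    exact g_nonneg hu
  · exact g_integrable h0 h1

lemma subst_integrable {α : ℝ} (h0 : 0 < α) (h1 : α < 1) {s : ℝ} (hs : 0 < s) :
    IntegrableOn (fun t : ℝ => (1 - Real.exp (-(t * s))) * t ^ (-1 - α)) (Ioi 0) := by
  have hcomp : IntegrableOn (fun t : ℝ => gfun α (t * s)) (Ioi 0) := by
    have h := (integrableOn_Ioi_comp_mul_right_iff (gfun α) 0 hs)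
    rw [zero_mul] at h
    exact h.mpr (g_integrable h0 h1)
  have : IntegrableOn (fun t : ℝ => s ^ (1 + α) * gfun α (t * s)) (Ioi 0) := hcomp.const_mul _
  apply this.congr_fun ?_ measurableSet_Ioi
  intro t ht
  simp only [gfun]
  rw [Real.mul_rpow (le_of_lt ht) hs.le]
  rw [show (1:ℝ) + α = -(-1-α) by ring, Real.rpow_neg hs.le]
  field_simp

lemma subst_eq {α : ℝ} (h0 : 0 < α) (h1 : α < 1) {s : ℝ} (hs : 0 ≤ s) :
    ∫ t in Ioi (0:ℝ), (1 - Real.exp (-(t * s))) * t ^ (-1 - α) = s ^ α * Cα α := by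
  rcases eq_or_lt_of_le hs with rfl | hs
  · simp [Real.zero_rpow (ne_of_gt h0)]
  have hcongr : ∫ t in Ioi (0:ℝ), (1 - Real.exp (-(t * s))) * t ^ (-1 - α)
      = ∫ t in Ioi (0:ℝ), s ^ (1 + α) * gfun α (t * s) := by
    refine setIntegral_congr_fun measurableSet_Ioi fun t ht => ?_
    simp only [gfun]
    rw [Real.mul_rpow (le_of_lt ht) hs.le]
    rw [show (1:ℝ) + α = -(-1-α) by ring, Real.rpow_neg hs.le]
    field_simp
  rw [hcongr, integral_const_mul]
  have := integral_comp_mul_right_Ioi (gfun α) 0 hs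
  rw [zero_mul] at this
  rw [this, smul_eq_mul, ← Cα]
  rw [show (1:ℝ) + α = α + 1 by ring, Real.rpow_add hs, Real.rpow_one]
  field_simp

lemma negDef_smul {X : Type*} {N : X → X → ℝ} (hN : IsNegDefKernel N) {t : ℝ} (ht : 0 ≤ t) :
    IsNegDefKernel (fun a b => t * N a b) := by
  refine ⟨fun a b => by simp only []; rw [hN.1], fun m y d hd => ?_⟩
  have h := hN.2 m y d hd
  have : ∑ i, ∑ j, t * N (y i) (y j) * d i * d j
      = t * ∑ i, ∑ j, N (y i) (y j) * d i * d j := by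
    rw [Finset.mul_sum]
    refine Finset.sum_congr rfl fun i _ => ?_
    rw [Finset.mul_sum]
    exact Finset.sum_congr rfl fun j _ => by ring
  rw [this]
  exact mul_nonpos_of_nonneg_of_nonpos ht h

theorem negDef_rpow {X : Type*} (N : X → X → ℝ) (hN : IsNegDefKernel N)
    (hpos : ∀ x y, 0 ≤ N x y) (α : ℝ) (h0 : 0 < α) (h1 : α < 1) :
    IsNegDefKernel (fun x y => N x y ^ α) := by
  refine ⟨fun x y => by simp only []; rw [hN.1], fun n x c hc => ?_⟩
  have hC := C_pos h0 h1
  set F : Fin n → Fin n → ℝ → ℝ :=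
    fun i j t => (1 - Real.exp (-(t * N (x i) (x j)))) * t ^ (-1 - α) * c i * c j with hF
  have hint : ∀ i j : Fin n, IntegrableOn (F i j) (Ioi 0) := by
    intro i j
    rcases eq_or_lt_of_le (hpos (x i) (x j)) with h | h
    · have : F i j = fun _ => 0 := by
        funext t; simp only [hF, ← h, mul_zero, neg_zero, Real.exp_zero, sub_self, zero_mul]
      rw [this]
      exact integrableOn_zero
    · exact ((subst_integrable h0 h1 h).mul_const _).mul_const _
  have hswap : ∫ t in Ioi (0:ℝ), ∑ i, ∑ j, F i j t = ∑ i, ∑ j, ∫ t in Ioi (0:ℝ), F i j t := by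
    rw [integral_finset_sum _ (fun i _ => integrable_finset_sum _ (fun j _ => hint i j))]
    exact Finset.sum_congr rfl fun i _ => integral_finset_sum _ (fun j _ => hint i j)
  have hterm : ∀ i j : Fin n, ∫ t in Ioi (0:ℝ), F i j t
      = N (x i) (x j) ^ α * Cα α * c i * c j := by
    intro i j
    simp only [hF]
    rw [MeasureTheory.integral_mul_const, MeasureTheory.integral_mul_const,
      subst_eq h0 h1 (hpos (x i) (x j))]
  have hnonpos : ∫ t in Ioi (0:ℝ), ∑ i, ∑ j, F i j t ≤ 0 := by
    apply setIntegral_nonpos measurableSet_Ioi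
    intro t ht
    have ht' : (0:ℝ) < t := ht
    have hqf := qf_exp_neg (negDef_smul hN ht'.le) n x c
    have hones : ∑ i, ∑ j, c i * c j = 0 := by
      have : ∑ i, ∑ j, c i * c j = (∑ i, c i) * (∑ j, c j) := by
        rw [Finset.sum_mul]
        exact Finset.sum_congr rfl fun i _ => by rw [Finset.mul_sum]
      rw [this, hc, zero_mul]
    have h2 : ∑ i, ∑ j, (1 - Real.exp (-(t * N (x i) (x j)))) * c i * c j ≤ 0 := by
      have hsub : ∑ i, ∑ j, (1 - Real.exp (-(t * N (x i) (x j)))) * c i * c j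
          = ∑ i, ∑ j, c i * c j
            - ∑ i, ∑ j, Real.exp (-(t * N (x i) (x j))) * c i * c j := by
        rw [← Finset.sum_sub_distrib]
        refine Finset.sum_congr rfl fun i _ => ?_
        rw [← Finset.sum_sub_distrib]
        exact Finset.sum_congr rfl fun j _ => by ring
      rw [hsub, hones]
      linarith
    have hfac : ∑ i, ∑ j, F i j t
        = t ^ (-1 - α) * ∑ i, ∑ j, (1 - Real.exp (-(t * N (x i) (x j)))) * c i * c j := by
      rw [Finset.mul_sum]
      refine Finset.sum_congr rfl fun i _ => ?_
      rw [Finset.mul_sum]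
      exact Finset.sum_congr rfl fun j _ => by simp only [hF]; ring
    rw [hfac]
    exact mul_nonpos_of_nonneg_of_nonpos (Real.rpow_nonneg ht'.le _) h2
  have hfinal : ∑ i, ∑ j, N (x i) (x j) ^ α * c i * c j
      = (Cα α)⁻¹ * ∫ t in Ioi (0:ℝ), ∑ i, ∑ j, F i j t := by
    rw [hswap, Finset.mul_sum]
    refine Finset.sum_congr rfl fun i _ => ?_
    rw [Finset.mul_sum]
    refine Finset.sum_congr rfl fun j _ => ?_
    rw [hterm i j]
    field_simp
  simp only []
  rw [hfinal]
  exact mul_nonpos_of_nonneg_of_nonpos (inv_nonneg.mpr hC.le) hnonpos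
end

section
/- For every 0 < p ≤ 2, the kernel (x,y) ↦ |x − y|^p is negative definite on the real line ℝ. -/
open Filter MeasureTheory

section Aux

open Set Real

private lemma posdef_exp_mul' (s : ℝ) (hs : 0 ≤ s) (n : ℕ) (x d : Fin n → ℝ) :
    0 ≤ ∑ i, ∑ j, d i * d j * Real.exp (s * (x i * x j)) := by
  have hsum : ∀ i j : Fin n, Summable (fun k : ℕ =>
      d i * x i ^ k * (d j * x j ^ k) * (s ^ k / (k.factorial : ℝ))) := by
    intro i j
    refine ((Real.summable_pow_div_factorial (s * (x i * x j))).mul_left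
      (d i * d j)).congr fun k => ?_
    rw [mul_pow, mul_pow]; ring
  have hexp : ∀ i j : Fin n, d i * d j * Real.exp (s * (x i * x j)) =
      ∑' k : ℕ, d i * x i ^ k * (d j * x j ^ k) * (s ^ k / (k.factorial : ℝ)) := by
    intro i j
    rw [Real.exp_eq_exp_ℝ, NormedSpace.exp_eq_tsum_div, ← tsum_mul_left]
    congr 1; ext k; rw [mul_pow, mul_pow]; ring
  calc (0:ℝ) ≤ ∑' k : ℕ, (s ^ k / (k.factorial : ℝ)) * (∑ i, d i * x i ^ k) ^ 2 := by
        refine tsum_nonneg fun k => mul_nonneg (by positivity) (sq_nonneg _)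
    _ = ∑' k : ℕ, ∑ i, ∑ j, d i * x i ^ k * (d j * x j ^ k) * (s ^ k / (k.factorial : ℝ)) := by
        congr 1; ext k
        rw [sq, Finset.sum_mul_sum, Finset.mul_sum]
        refine Finset.sum_congr rfl fun i _ => ?_
        rw [Finset.mul_sum]
        exact Finset.sum_congr rfl fun j _ => by ring
    _ = ∑ i, ∑ j, ∑' k : ℕ, d i * x i ^ k * (d j * x j ^ k) * (s ^ k / (k.factorial : ℝ)) := by
        rw [Summable.tsum_finsetSum (fun i _ => summable_sum fun j _ => hsum i j)]
        exact Finset.sum_congr rfl fun i _ =>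
          (Summable.tsum_finsetSum (fun j _ => hsum i j))
    _ = ∑ i, ∑ j, d i * d j * Real.exp (s * (x i * x j)) := by
        exact Finset.sum_congr rfl fun i _ => Finset.sum_congr rfl fun j _ => (hexp i j).symm

private lemma gaussian_posdef' (s : ℝ) (hs : 0 ≤ s) (n : ℕ) (x c : Fin n → ℝ) :
    0 ≤ ∑ i, ∑ j, Real.exp (-((x i - x j) ^ 2 * s)) * c i * c j := by
  have key : ∀ i j : Fin n, Real.exp (-((x i - x j) ^ 2 * s)) * c i * c j =
      (c i * Real.exp (-(s * x i ^ 2))) * (c j * Real.exp (-(s * x j ^ 2))) *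
        Real.exp (2 * s * (x i * x j)) := by
    intro i j
    have h : -((x i - x j) ^ 2 * s) = -(s * x i ^ 2) + -(s * x j ^ 2) + 2 * s * (x i * x j) := by
      ring
    rw [h, Real.exp_add, Real.exp_add]
    ring
  simp_rw [key]
  exact posdef_exp_mul' (2 * s) (by linarith) n x _

private lemma one_sub_gaussian_negdef' (s : ℝ) (hs : 0 ≤ s) (n : ℕ) (x c : Fin n → ℝ)
    (hc : (∑ i, c i) = 0) :
    ∑ i, ∑ j, (1 - Real.exp (-((x i - x j) ^ 2 * s))) * c i * c j ≤ 0 := by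
  have h1 : ∑ i, ∑ j, c i * c j = 0 := by
    rw [← Finset.sum_mul_sum, hc, zero_mul]
  have h2 := gaussian_posdef' s hs n x c
  have h3 : ∑ i, ∑ j, (1 - Real.exp (-((x i - x j) ^ 2 * s))) * c i * c j =
      (∑ i, ∑ j, c i * c j) - ∑ i, ∑ j, Real.exp (-((x i - x j) ^ 2 * s)) * c i * c j := by
    rw [← Finset.sum_sub_distrib]
    refine Finset.sum_congr rfl fun i _ => ?_
    rw [← Finset.sum_sub_distrib]
    exact Finset.sum_congr rfl fun j _ => by ring
  rw [h3, h1]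
  linarith

private lemma one_sub_exp_neg_nonneg' {u : ℝ} (hu : 0 ≤ u) : 0 ≤ 1 - Real.exp (-u) := by
  have := Real.exp_le_exp.mpr (neg_nonpos.mpr hu)
  simpa using this

private lemma one_sub_exp_neg_le' {u : ℝ} : 1 - Real.exp (-u) ≤ u := by
  nlinarith [Real.add_one_le_exp (-u)]

private lemma integrand_integrable' {α : ℝ} (hα0 : 0 < α) (hα1 : α < 1) {t : ℝ} (ht : 0 ≤ t) :
    IntegrableOn (fun s : ℝ => (1 - Real.exp (-(t * s))) * s ^ (-1 - α)) (Ioi 0) := by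
  have hmeas : ∀ u : Set ℝ, AEStronglyMeasurable
      (fun s : ℝ => (1 - Real.exp (-(t * s))) * s ^ (-1 - α)) (volume.restrict u) :=
    fun u => Measurable.aestronglyMeasurable
      ((measurable_const.sub ((measurable_id.const_mul t).neg.exp)).mul
      (measurable_id.pow_const _))
  have h1 : IntegrableOn (fun s : ℝ => (1 - Real.exp (-(t * s))) * s ^ (-1 - α)) (Ioc 0 1) := by
    have hg : IntegrableOn (fun s : ℝ => t * s ^ (-α)) (Ioc (0:ℝ) 1) := by
      refine Integrable.const_mul ?_ t
      rw [← IntegrableOn, ← intervalIntegrable_iff_integrableOn_Ioc_of_le zero_le_one]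
      exact intervalIntegral.intervalIntegrable_rpow' (by linarith)
    refine Integrable.mono hg (hmeas _) ?_
    filter_upwards [ae_restrict_mem measurableSet_Ioc] with s hs
    have hs0 : 0 < s := hs.1
    have hb : 0 ≤ 1 - Real.exp (-(t * s)) := one_sub_exp_neg_nonneg' (by positivity)
    rw [Real.norm_eq_abs, Real.norm_eq_abs, abs_of_nonneg
      (mul_nonneg hb (Real.rpow_nonneg hs0.le _)), abs_of_nonneg
      (mul_nonneg ht (Real.rpow_nonneg hs0.le _))]
    have h2 : (1 - Real.exp (-(t * s))) ≤ t * s := one_sub_exp_neg_le'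
    calc (1 - Real.exp (-(t * s))) * s ^ (-1 - α) ≤ (t * s) * s ^ (-1 - α) :=
          mul_le_mul_of_nonneg_right h2 (Real.rpow_nonneg hs0.le _)
      _ = t * s ^ (-α) := by
          rw [mul_assoc]
          congr 1
          rw [← Real.rpow_one_add' hs0.le (by intro h; linarith)]
          ring_nf
  have h2 : IntegrableOn (fun s : ℝ => (1 - Real.exp (-(t * s))) * s ^ (-1 - α)) (Ioi 1) := by
    have hg : IntegrableOn (fun s : ℝ => s ^ (-1 - α)) (Ioi (1:ℝ)) :=
      integrableOn_Ioi_rpow_of_lt (by linarith) one_pos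
    refine Integrable.mono hg (hmeas _) ?_
    filter_upwards [ae_restrict_mem measurableSet_Ioi] with s hs
    have hs0 : (0:ℝ) < s := lt_trans one_pos hs
    have hb : 0 ≤ 1 - Real.exp (-(t * s)) := one_sub_exp_neg_nonneg' (by positivity)
    have hb1 : 1 - Real.exp (-(t * s)) ≤ 1 := by
      have := Real.exp_pos (-(t * s)); linarith
    rw [Real.norm_eq_abs, Real.norm_eq_abs, abs_of_nonneg
      (mul_nonneg hb (Real.rpow_nonneg hs0.le _)), abs_of_nonneg (Real.rpow_nonneg hs0.le _)]
    nlinarith [Real.rpow_nonneg hs0.le (-1 - α)]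
  have hu : (Ioi (0:ℝ)) = Ioc 0 1 ∪ Ioi 1 := (Ioc_union_Ioi_eq_Ioi zero_le_one).symm
  rw [hu]
  exact h1.union h2

private lemma scaling' {α : ℝ} {t : ℝ} (ht : 0 < t) :
    ∫ s in Ioi (0:ℝ), (1 - Real.exp (-(t * s))) * s ^ (-1 - α) =
      t ^ α * ∫ u in Ioi (0:ℝ), (1 - Real.exp (-u)) * u ^ (-1 - α) := by
  have key : ∀ s ∈ Ioi (0:ℝ), (1 - Real.exp (-(t * s))) * s ^ (-1 - α) =
      t ^ (1 + α) * ((1 - Real.exp (-(t * s))) * (t * s) ^ (-1 - α)) := by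
    intro s hs
    have hs0 : (0:ℝ) < s := hs
    have h1 : t ^ (1 + α) * t ^ (-1 - α) = 1 := by
      rw [← Real.rpow_add ht]; norm_num
    rw [Real.mul_rpow ht.le hs0.le]
    linear_combination (-((1 - Real.exp (-(t * s))) * s ^ (-1 - α))) * h1
  rw [setIntegral_congr_fun measurableSet_Ioi key, MeasureTheory.integral_const_mul,
    integral_comp_mul_left_Ioi (fun u => (1 - Real.exp (-u)) * u ^ (-1 - α)) 0 ht,
    mul_zero, smul_eq_mul, ← mul_assoc]
  congr 1
  rw [← Real.rpow_neg_one t, ← Real.rpow_add ht]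
  norm_num

private lemma C_pos' {α : ℝ} (hα0 : 0 < α) (hα1 : α < 1) :
    0 < ∫ u in Ioi (0:ℝ), (1 - Real.exp (-u)) * u ^ (-1 - α) := by
  have hi : IntegrableOn (fun u : ℝ => (1 - Real.exp (-u)) * u ^ (-1 - α)) (Ioi 0) := by
    have := integrand_integrable' hα0 hα1 (t := 1) zero_le_one
    simpa using this
  rw [setIntegral_pos_iff_support_of_nonneg_ae ?_ hi]
  · have hsub : Ioi (0:ℝ) ⊆
        Function.support (fun u : ℝ => (1 - Real.exp (-u)) * u ^ (-1 - α)) ∩ Ioi 0 := by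
      intro u hu
      refine ⟨?_, hu⟩
      have hu0 : (0:ℝ) < u := hu
      have h1 : 0 < 1 - Real.exp (-u) := by
        have : Real.exp (-u) < Real.exp 0 := Real.exp_lt_exp.mpr (by linarith)
        simpa using this
      have h2 : 0 < u ^ (-1 - α) := Real.rpow_pos_of_pos hu0 _
      exact ne_of_gt (mul_pos h1 h2)
    calc (0 : ENNReal) < volume (Ioi (0:ℝ)) := by simp
      _ ≤ _ := measure_mono hsub
  · filter_upwards [ae_restrict_mem measurableSet_Ioi] with u hu
    exact mul_nonneg (one_sub_exp_neg_nonneg' (le_of_lt hu)) (Real.rpow_nonneg (le_of_lt hu) _)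

end Aux

theorem negDef_abs_rpow (p : ℝ) (h0 : 0 < p) (h2 : p ≤ 2) :
    IsNegDefKernel (fun x y : ℝ => |x - y| ^ p) := by
  constructor
  · intro x y
    simp only []
    rw [abs_sub_comm]
  intro n x c hc
  rcases eq_or_lt_of_le h2 with hp2 | hp2
  · -- p = 2
    subst hp2
    have habs : ∀ i j : Fin n, |x i - x j| ^ (2:ℝ) * c i * c j =
        x i ^ 2 * c i * c j + c i * (x j ^ 2 * c j) - 2 * ((x i * c i) * (x j * c j)) := by
      intro i j
      rw [show ((2:ℝ)) = ((2:ℕ):ℝ) from by norm_num, Real.rpow_natCast, sq_abs]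
      ring
    simp_rw [habs, Finset.sum_sub_distrib, Finset.sum_add_distrib, ← Finset.mul_sum,
      ← Finset.sum_mul, hc]
    simp
    nlinarith [sq_nonneg (∑ i, x i * c i), Finset.mul_sum (Finset.univ : Finset (Fin n))
      (fun j => (x j * c j)) (2:ℝ)]
  · -- p < 2
    set α : ℝ := p / 2 with hα
    have hα0 : 0 < α := by positivity
    have hα1 : α < 1 := by rw [hα]; linarith
    set C : ℝ := ∫ u in Set.Ioi (0:ℝ), (1 - Real.exp (-u)) * u ^ (-1 - α) with hCdef
    have hC : 0 < C := C_pos' hα0 hα1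
    have key : ∀ t : ℝ, |t| ^ p =
        C⁻¹ * ∫ s in Set.Ioi (0:ℝ), (1 - Real.exp (-(t ^ 2 * s))) * s ^ (-1 - α) := by
      intro t
      rcases eq_or_ne t 0 with rfl | htne
      · simp [Real.zero_rpow h0.ne']
      · have ht2 : 0 < t ^ 2 := by positivity
        rw [scaling' ht2, ← hCdef]
        have habs : ((t ^ 2 : ℝ)) ^ α = |t| ^ p := by
          rw [← sq_abs, ← Real.rpow_natCast |t| 2, ← Real.rpow_mul (abs_nonneg t)]
          norm_num
          rw [show (2 : ℝ) * α = p by rw [hα]; ring]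
        rw [habs]
        field_simp
    have hint : ∀ i j : Fin n, IntegrableOn
        (fun s : ℝ => (1 - Real.exp (-((x i - x j) ^ 2 * s))) * s ^ (-1 - α) * c i * c j)
        (Set.Ioi (0:ℝ)) := by
      intro i j
      exact ((integrand_integrable' hα0 hα1 (sq_nonneg (x i - x j))).mul_const _).mul_const _
    have hswap : ∑ i, ∑ j, |x i - x j| ^ p * c i * c j =
        C⁻¹ * ∫ s in Set.Ioi (0:ℝ),
          ∑ i, ∑ j, (1 - Real.exp (-((x i - x j) ^ 2 * s))) * s ^ (-1 - α) * c i * c j := by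
      rw [integral_finset_sum _ (fun i _ => integrable_finset_sum _ (fun j _ => hint i j))]
      simp_rw [integral_finset_sum _ (fun j _ => hint _ j)]
      rw [Finset.mul_sum]
      refine Finset.sum_congr rfl fun i _ => ?_
      rw [Finset.mul_sum]
      refine Finset.sum_congr rfl fun j _ => ?_
      rw [key (x i - x j)]
      rw [MeasureTheory.integral_mul_const, MeasureTheory.integral_mul_const]
      ring
    rw [hswap]
    have hneg : ∫ s in Set.Ioi (0:ℝ),
        ∑ i, ∑ j, (1 - Real.exp (-((x i - x j) ^ 2 * s))) * s ^ (-1 - α) * c i * c j ≤ 0 := by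
      refine setIntegral_nonpos measurableSet_Ioi fun s hs => ?_
      have hs0 : (0:ℝ) < s := hs
      have h1 := one_sub_gaussian_negdef' s hs0.le n x c hc
      have hrw : ∑ i, ∑ j, (1 - Real.exp (-((x i - x j) ^ 2 * s))) * s ^ (-1 - α) * c i * c j =
          s ^ (-1 - α) * ∑ i, ∑ j, (1 - Real.exp (-((x i - x j) ^ 2 * s))) * c i * c j := by
        rw [Finset.mul_sum]
        refine Finset.sum_congr rfl fun i _ => ?_
        rw [Finset.mul_sum]
        exact Finset.sum_congr rfl fun j _ => by ring
      rw [hrw]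
      exact mul_nonpos_of_nonneg_of_nonpos (Real.rpow_nonneg hs0.le _) h1
    have hCinv : 0 ≤ C⁻¹ := by positivity
    exact mul_nonpos_of_nonneg_of_nonpos hCinv hneg
end

section
/- For every 0 < p ≤ 2 and any measure μ, the function x ↦ ‖x‖_p^p is negative definite on the additive group L_p(μ); that is, the kernel (f,g) ↦ ∫ |f − g|^p dμ is negative definite on L_p(μ). -/
open Filter MeasureTheory

section Aux

open Set Real

/-- A.e.-strong measurability of the Lévy integrand. -/
lemma aesm_h (p t : ℝ) :
    AEStronglyMeasurable (fun s : ℝ => (1 - Real.cos (t*s)) * s ^ (-(1+p)))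
      (volume.restrict (Ioi (0:ℝ))) := by
  refine ContinuousOn.aestronglyMeasurable ?_ measurableSet_Ioi
  refine ContinuousOn.mul ?_ ?_
  · exact (continuous_const.sub (Real.continuous_cos.comp
      (continuous_const.mul continuous_id))).continuousOn
  · exact continuousOn_id.rpow_const fun x hx => Or.inl (ne_of_gt hx)

/-- Integrability of the Lévy integrand for `0 < p < 2`. -/
lemma integrable_h {p : ℝ} (hp0 : 0 < p) (hp2 : p < 2) (t : ℝ) :
    IntegrableOn (fun s : ℝ => (1 - Real.cos (t*s)) * s ^ (-(1+p))) (Ioi (0:ℝ)) := by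
  rw [← Set.Ioo_union_Ici_eq_Ioi (zero_lt_one)]
  refine MeasureTheory.IntegrableOn.union ?_ ?_
  · have hdom : IntegrableOn (fun s : ℝ => t^2/2 * s ^ (1 - p)) (Ioo (0:ℝ) 1) :=
      ((intervalIntegral.integrableOn_Ioo_rpow_iff one_pos).2 (by linarith)).const_mul _
    refine Integrable.mono' hdom ((aesm_h p t).mono_set Ioo_subset_Ioi_self) ?_
    refine (ae_restrict_iff' measurableSet_Ioo).2 (ae_of_all _ fun s hs => ?_)
    have hs0 : (0:ℝ) < s := hs.1
    have h1 : 0 ≤ 1 - Real.cos (t*s) := by nlinarith [Real.cos_le_one (t*s)]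
    have h2 : 1 - Real.cos (t*s) ≤ (t*s)^2/2 := by
      nlinarith [Real.one_sub_sq_div_two_le_cos (x := t*s)]
    have hrp : (0:ℝ) ≤ s ^ (-(1+p)) := Real.rpow_nonneg hs0.le _
    rw [Real.norm_eq_abs, abs_mul, abs_of_nonneg h1, abs_of_nonneg hrp]
    have key : s ^ (1 - p) = s^2 * s ^ (-(1+p)) := by
      rw [show (s:ℝ)^2 = s ^ (2:ℝ) by rw [← Real.rpow_natCast s 2]; norm_num,
        ← Real.rpow_add hs0]
      congr 1; ring
    rw [key]
    nlinarith [sq_nonneg (t*s), sq_nonneg s]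
  · have hdom : IntegrableOn (fun s : ℝ => 2 * s ^ (-(1+p))) (Ici (1:ℝ)) := by
      rw [integrableOn_Ici_iff_integrableOn_Ioi]
      exact (integrableOn_Ioi_rpow_of_lt (by linarith) one_pos).const_mul _
    refine Integrable.mono' hdom ((aesm_h p t).mono_set (Ici_subset_Ioi.2 zero_lt_one)) ?_
    refine (ae_restrict_iff' measurableSet_Ici).2 (ae_of_all _ fun s hs => ?_)
    have hs0 : (0:ℝ) < s := lt_of_lt_of_le zero_lt_one hs
    have h1 : 0 ≤ 1 - Real.cos (t*s) := by nlinarith [Real.cos_le_one (t*s)]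
    have h2 : 1 - Real.cos (t*s) ≤ 2 := by nlinarith [Real.neg_one_le_cos (t*s)]
    have hrp : (0:ℝ) ≤ s ^ (-(1+p)) := Real.rpow_nonneg hs0.le _
    rw [Real.norm_eq_abs, abs_mul, abs_of_nonneg h1, abs_of_nonneg hrp]
    nlinarith

/-- The Lévy scaling identity : `∫ (1 - cos(ts)) s^{-(1+p)} = |t|^p ∫ (1 - cos s) s^{-(1+p)}`. -/
lemma scaling_h {p : ℝ} (hp0 : 0 < p) (t : ℝ) :
    ∫ s in Ioi (0:ℝ), (1 - Real.cos (t*s)) * s ^ (-(1+p))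
      = |t| ^ p * ∫ s in Ioi (0:ℝ), (1 - Real.cos s) * s ^ (-(1+p)) := by
  rcases eq_or_ne t 0 with rfl | ht
  · simp [Real.zero_rpow hp0.ne']
  · have habs : 0 < |t| := abs_pos.2 ht
    have key := integral_comp_mul_left_Ioi
      (fun u : ℝ => (1 - Real.cos u) * u ^ (-(1+p))) 0 habs
    have hAB : |t| ^ (1+p) * |t| ^ (-(1+p)) = 1 := by
      have h00 : (1 + p) + -(1 + p) = (0:ℝ) := by ring
      rw [← Real.rpow_add habs, h00, Real.rpow_zero]
    calc ∫ s in Ioi (0:ℝ), (1 - Real.cos (t*s)) * s ^ (-(1+p))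
        = ∫ s in Ioi (0:ℝ), |t| ^ (1+p) * ((1 - Real.cos (|t| * s)) * (|t| * s) ^ (-(1+p))) := by
          refine setIntegral_congr_fun measurableSet_Ioi fun s hs => ?_
          have hs0 : (0:ℝ) < s := hs
          rw [Real.mul_rpow habs.le hs0.le,
            show |t| * s = |t*s| by rw [abs_mul, abs_of_nonneg hs0.le], Real.cos_abs]
          linear_combination (Real.cos (t*s) - 1) * s ^ (-(1+p)) * hAB
      _ = |t| ^ (1+p) * (|t|⁻¹ * ∫ s in Ioi (0:ℝ), (1 - Real.cos s) * s ^ (-(1+p))) := by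
          rw [MeasureTheory.integral_const_mul, key]
          simp [mul_zero]
      _ = |t| ^ p * ∫ s in Ioi (0:ℝ), (1 - Real.cos s) * s ^ (-(1+p)) := by
          rw [← mul_assoc]
          congr 1
          rw [← Real.rpow_neg_one |t|, ← Real.rpow_add habs]
          congr 1; ring

/-- Positivity of the Lévy constant. -/
lemma I_pos {p : ℝ} (hp0 : 0 < p) (hp2 : p < 2) :
    0 < ∫ s in Ioi (0:ℝ), (1 - Real.cos s) * s ^ (-(1+p)) := by
  have hint : IntegrableOn (fun s : ℝ => (1 - Real.cos s) * s ^ (-(1+p))) (Ioi (0:ℝ)) := by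
    simpa using integrable_h hp0 hp2 1
  have hnonneg : 0 ≤ᵐ[volume.restrict (Ioi (0:ℝ))]
      fun s : ℝ => (1 - Real.cos s) * s ^ (-(1+p)) := by
    refine (ae_restrict_iff' measurableSet_Ioi).2 (ae_of_all _ fun s hs => ?_)
    have hs0 : (0:ℝ) < s := hs
    have h1 := Real.cos_le_one s
    have h2 := Real.rpow_nonneg hs0.le (-(1+p))
    show (0:ℝ) ≤ (1 - Real.cos s) * s ^ (-(1+p))
    nlinarith
  rw [setIntegral_pos_iff_support_of_nonneg_ae hnonneg hint]
  have hsub : Ioo (π/2) π ⊆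
      Function.support (fun s : ℝ => (1 - Real.cos s) * s ^ (-(1+p))) ∩ Ioi 0 := by
    intro s hs
    have hpi := Real.pi_pos
    have hs0 : (0:ℝ) < s := lt_trans (by linarith) hs.1
    have hcos : Real.cos s ≤ 0 :=
      Real.cos_nonpos_of_pi_div_two_le_of_le hs.1.le (by linarith [hs.2.le])
    constructor
    · have hrp : (0:ℝ) < s ^ (-(1+p)) := Real.rpow_pos_of_pos hs0 _
      have hpos : (0:ℝ) < (1 - Real.cos s) * s ^ (-(1+p)) := by nlinarith
      exact Function.mem_support.2 (ne_of_gt hpos)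
    · exact hs0
  refine lt_of_lt_of_le ?_ (measure_mono hsub)
  rw [Real.volume_Ioo]
  have hpi := Real.pi_pos
  exact ENNReal.ofReal_pos.2 (by linarith)

/-- Expanding a double cosine sum as a sum of two squares. -/
lemma cos_expand (n : ℕ) (a c : Fin n → ℝ) (s : ℝ) :
    ∑ i, ∑ j, c i * c j * Real.cos ((a i - a j) * s)
      = (∑ i, c i * Real.cos (a i * s))^2 + (∑ i, c i * Real.sin (a i * s))^2 := by
  simp only [sq, Finset.sum_mul_sum, ← Finset.sum_add_distrib]
  refine Finset.sum_congr rfl fun i _ => Finset.sum_congr rfl fun j _ => ?_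
  rw [sub_mul, Real.cos_sub]
  ring

/-- The case `p = 2` is elementary. -/
lemma negdef_two (n : ℕ) (a c : Fin n → ℝ) (hc : ∑ i, c i = 0) :
    ∑ i, ∑ j, |a i - a j| ^ (2:ℝ) * c i * c j ≤ 0 := by
  have habs : ∀ x : ℝ, |x| ^ (2:ℝ) = x^2 := fun x => by
    rw [show ((2:ℝ)) = ((2:ℕ):ℝ) by norm_num, Real.rpow_natCast, sq_abs]
  simp_rw [habs]
  have h1 : ∀ i, ∑ j, (a i - a j)^2 * c i * c j
      = (a i)^2 * c i * (∑ j, c j) - 2 * (a i * c i) * (∑ j, a j * c j)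
        + c i * (∑ j, (a j)^2 * c j) := by
    intro i
    rw [Finset.mul_sum, Finset.mul_sum, Finset.mul_sum, ← Finset.sum_sub_distrib,
      ← Finset.sum_add_distrib]
    exact Finset.sum_congr rfl fun j _ => by ring
  have key : ∑ i, ∑ j, (a i - a j)^2 * c i * c j = -2 * (∑ i, a i * c i)^2 := by
    simp_rw [h1, hc, mul_zero, zero_sub]
    have h2 : ∀ i, -(2 * (a i * c i) * (∑ j, a j * c j)) + c i * (∑ j, (a j)^2 * c j)
        = (a i * c i) * (-2 * (∑ j, a j * c j)) + c i * (∑ j, (a j)^2 * c j) := fun i => by ring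
    simp_rw [h2]
    rw [Finset.sum_add_distrib, ← Finset.sum_mul, ← Finset.sum_mul, hc, zero_mul, add_zero]
    ring
  rw [key]
  nlinarith [sq_nonneg (∑ i, a i * c i)]

/-- `t ↦ |t|^p` is a negative definite kernel on `ℝ` for `0 < p ≤ 2`. -/
lemma negdef_real {p : ℝ} (hp0 : 0 < p) (hp2 : p ≤ 2) (n : ℕ) (a c : Fin n → ℝ)
    (hc : ∑ i, c i = 0) : ∑ i, ∑ j, |a i - a j| ^ p * c i * c j ≤ 0 := by
  rcases eq_or_lt_of_le hp2 with rfl | hp2'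
  · exact negdef_two n a c hc
  set I := ∫ s in Ioi (0:ℝ), (1 - Real.cos s) * s ^ (-(1+p)) with hI
  have hIpos := I_pos hp0 hp2'
  have hint : ∀ i j : Fin n, Integrable
      (fun s : ℝ => c i * c j * ((1 - Real.cos ((a i - a j)*s)) * s ^ (-(1+p))))
      (volume.restrict (Ioi (0:ℝ))) := fun i j =>
    (integrable_h hp0 hp2' (a i - a j)).const_mul _
  have step1 : (∑ i, ∑ j, |a i - a j| ^ p * c i * c j) * I
      = ∫ s in Ioi (0:ℝ),
          ∑ i, ∑ j, c i * c j * ((1 - Real.cos ((a i - a j)*s)) * s ^ (-(1+p))) := by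
    rw [integral_finset_sum _ (fun i _ => integrable_finset_sum _ (fun j _ => hint i j)),
      Finset.sum_mul]
    refine Finset.sum_congr rfl fun i _ => ?_
    rw [integral_finset_sum _ (fun j _ => hint i j), Finset.sum_mul]
    refine Finset.sum_congr rfl fun j _ => ?_
    rw [MeasureTheory.integral_const_mul, scaling_h hp0 (a i - a j), ← hI]
    ring
  have step2 : ∀ s ∈ Ioi (0:ℝ),
      ∑ i, ∑ j, c i * c j * ((1 - Real.cos ((a i - a j)*s)) * s ^ (-(1+p))) ≤ 0 := by
    intro s hs
    have hs0 : (0:ℝ) < s := hs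
    have hrp : (0:ℝ) ≤ s ^ (-(1+p)) := Real.rpow_nonneg hs0.le _
    have expand : ∑ i, ∑ j, c i * c j * ((1 - Real.cos ((a i - a j)*s)) * s ^ (-(1+p)))
        = ((∑ i, c i)^2 - ((∑ i, c i * Real.cos (a i * s))^2
            + (∑ i, c i * Real.sin (a i * s))^2)) * s ^ (-(1+p)) := by
      rw [← cos_expand n a c s, sq (∑ i, c i), Finset.sum_mul_sum, ← Finset.sum_sub_distrib,
        Finset.sum_mul]
      refine Finset.sum_congr rfl fun i _ => ?_
      rw [← Finset.sum_sub_distrib, Finset.sum_mul]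
      exact Finset.sum_congr rfl fun j _ => by ring
    rw [expand, hc]
    nlinarith [sq_nonneg (∑ i, c i * Real.cos (a i * s)),
      sq_nonneg (∑ i, c i * Real.sin (a i * s))]
  have h3 : (∑ i, ∑ j, |a i - a j| ^ p * c i * c j) * I ≤ 0 := by
    rw [step1]
    exact setIntegral_nonpos measurableSet_Ioi step2
  nlinarith

end Aux

theorem negDef_Lp_kernel {Ω : Type*} [MeasurableSpace Ω] (μ : Measure Ω)
    (p : ℝ) (h0 : 0 < p) (h2 : p ≤ 2) :
    IsNegDefKernel (fun f g : Lp ℝ (ENNReal.ofReal p) μ =>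
      ∫ ω, |(f : Ω → ℝ) ω - (g : Ω → ℝ) ω| ^ p ∂μ) := by
  constructor
  · intro f g
    show (∫ ω, |(f : Ω → ℝ) ω - (g : Ω → ℝ) ω| ^ p ∂μ)
      = ∫ ω, |(g : Ω → ℝ) ω - (f : Ω → ℝ) ω| ^ p ∂μ
    congr 1
    ext ω
    rw [abs_sub_comm]
  · intro n x c hc
    show ∑ i, ∑ j, (∫ ω, |(x i : Ω → ℝ) ω - (x j : Ω → ℝ) ω| ^ p ∂μ) * c i * c j ≤ 0
    have hint : ∀ i j : Fin n,
        Integrable (fun ω => |(x i : Ω → ℝ) ω - (x j : Ω → ℝ) ω| ^ p) μ := by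
      intro i j
      have h1 : MemLp ((x i - x j : Lp ℝ (ENNReal.ofReal p) μ) : Ω → ℝ) (ENNReal.ofReal p) μ :=
        Lp.memLp _
      have h2' := h1.integrable_norm_rpow (by simp [ENNReal.ofReal_eq_zero]; linarith)
        ENNReal.ofReal_ne_top
      rw [ENNReal.toReal_ofReal h0.le] at h2'
      refine h2'.congr ?_
      filter_upwards [Lp.coeFn_sub (x i) (x j)] with ω hω
      rw [hω]
      simp [Real.norm_eq_abs]
    calc ∑ i, ∑ j, (∫ ω, |(x i : Ω → ℝ) ω - (x j : Ω → ℝ) ω| ^ p ∂μ) * c i * c j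
        = ∫ ω, ∑ i, ∑ j, |(x i : Ω → ℝ) ω - (x j : Ω → ℝ) ω| ^ p * c i * c j ∂μ := by
          rw [integral_finset_sum _ (fun i _ => integrable_finset_sum _
            (fun j _ => ((hint i j).mul_const _).mul_const _))]
          refine Finset.sum_congr rfl fun i _ => ?_
          rw [integral_finset_sum _ (fun j _ => ((hint i j).mul_const _).mul_const _)]
          refine Finset.sum_congr rfl fun j _ => ?_
          rw [MeasureTheory.integral_mul_const, MeasureTheory.integral_mul_const]
      _ ≤ 0 := integral_nonpos fun ω =>
          negdef_real h0 h2 n (fun i => (x i : Ω → ℝ) ω) c hc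
end

section
/- For 1 ≤ p < 2, if a metric space X admits a coarse embedding into ℓ^p, then X admits a coarse embedding into the Hilbert space ℓ². -/
open Filter MeasureTheory ENNReal

noncomputable section CoarseAux

/-- weight times (1 - cos) term of the scale-invariant kernel -/
def skerTerm (q d : ℝ) (k : ℤ) : ℝ :=
  (2:ℝ) ^ (-(k:ℝ) * q) * (1 - Real.cos ((2:ℝ) ^ ((k:ℤ):ℝ) * d))

def sker (q d : ℝ) : ℝ := ∑' k : ℤ, skerTerm q d k

def skerMaj (q : ℝ) (k : ℤ) : ℝ :=
  min ((2:ℝ) ^ ((k:ℝ) * (2 - q))) ((2:ℝ) ^ (-(k:ℝ) * q))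

lemma skerTerm_nonneg (q d : ℝ) (k : ℤ) : 0 ≤ skerTerm q d k := by
  have h1 := Real.cos_le_one ((2:ℝ) ^ ((k:ℤ):ℝ) * d)
  have h2 : (0:ℝ) ≤ (2:ℝ) ^ (-(k:ℝ) * q) := (Real.rpow_pos_of_pos two_pos _).le
  have : (0:ℝ) ≤ 1 - Real.cos ((2:ℝ) ^ ((k:ℤ):ℝ) * d) := by linarith
  exact mul_nonneg h2 this

lemma skerMaj_nonneg (q : ℝ) (k : ℤ) : 0 ≤ skerMaj q k :=
  le_min (Real.rpow_pos_of_pos two_pos _).le (Real.rpow_pos_of_pos two_pos _).le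

lemma skerTerm_le (q d : ℝ) (k : ℤ) :
    skerTerm q d k ≤ 2 * max 1 (d ^ 2) * skerMaj q k := by
  have hw : (0:ℝ) < (2:ℝ) ^ (-(k:ℝ) * q) := Real.rpow_pos_of_pos two_pos _
  have hM : (1:ℝ) ≤ max 1 (d ^ 2) := le_max_left _ _
  have hd2 : d ^ 2 ≤ max 1 (d ^ 2) := le_max_right _ _
  set a := (2:ℝ) ^ ((k:ℤ):ℝ) * d with ha
  have hcos1 : 1 - Real.cos a ≤ a ^ 2 / 2 := by
    have := Real.one_sub_sq_div_two_le_cos (x := a); linarith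
  have hcos2 : 1 - Real.cos a ≤ 2 := by
    have := Real.neg_one_le_cos a; linarith
  rcases le_total ((2:ℝ) ^ ((k:ℝ) * (2 - q))) ((2:ℝ) ^ (-(k:ℝ) * q)) with h | h
  · have hmin : skerMaj q k = (2:ℝ) ^ ((k:ℝ) * (2 - q)) := min_eq_left h
    rw [hmin]
    have ha2 : a ^ 2 = (2:ℝ) ^ (2 * (k:ℝ)) * d ^ 2 := by
      rw [ha, mul_pow, ← Real.rpow_natCast ((2:ℝ) ^ ((k:ℤ):ℝ)) 2, ← Real.rpow_mul (by norm_num)]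
      push_cast
      ring_nf
    calc skerTerm q d k ≤ (2:ℝ) ^ (-(k:ℝ) * q) * (a ^ 2 / 2) :=
          mul_le_mul_of_nonneg_left hcos1 hw.le
      _ = (2:ℝ) ^ (-(k:ℝ) * q) * (2:ℝ) ^ (2 * (k:ℝ)) * (d ^ 2 / 2) := by rw [ha2]; ring
      _ = (2:ℝ) ^ ((k:ℝ) * (2 - q)) * (d ^ 2 / 2) := by
          rw [← Real.rpow_add two_pos]; ring_nf
      _ ≤ (2:ℝ) ^ ((k:ℝ) * (2 - q)) * (2 * max 1 (d ^ 2)) := by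
          apply mul_le_mul_of_nonneg_left _ (Real.rpow_pos_of_pos two_pos _).le
          nlinarith
      _ = 2 * max 1 (d ^ 2) * (2:ℝ) ^ ((k:ℝ) * (2 - q)) := by ring
  · have hmin : skerMaj q k = (2:ℝ) ^ (-(k:ℝ) * q) := min_eq_right h
    rw [hmin]
    calc skerTerm q d k ≤ (2:ℝ) ^ (-(k:ℝ) * q) * 2 := mul_le_mul_of_nonneg_left hcos2 hw.le
      _ ≤ 2 * max 1 (d ^ 2) * (2:ℝ) ^ (-(k:ℝ) * q) := by nlinarith

lemma summable_skerMaj {q : ℝ} (hq1 : 0 < q) (hq2 : q < 2) : Summable (skerMaj q) := by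
  apply Summable.of_nat_of_neg
  · apply Summable.of_nonneg_of_le (fun n => skerMaj_nonneg q n)
      (f := fun n : ℕ => ((2:ℝ) ^ (-q)) ^ n)
    · intro n
      calc skerMaj q n ≤ (2:ℝ) ^ (-(n:ℝ) * q) := min_le_right _ _
        _ = ((2:ℝ) ^ (-q)) ^ n := by
            rw [← Real.rpow_natCast ((2:ℝ) ^ (-q)) n, ← Real.rpow_mul (by norm_num)]
            ring_nf
    · exact summable_geometric_of_lt_one (Real.rpow_pos_of_pos two_pos _).le
        (Real.rpow_lt_one_of_one_lt_of_neg one_lt_two (by linarith))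
  · apply Summable.of_nonneg_of_le (fun n => skerMaj_nonneg q (-n))
      (f := fun n : ℕ => ((2:ℝ) ^ (-(2 - q))) ^ n)
    · intro n
      calc skerMaj q (-n) ≤ (2:ℝ) ^ (((-n:ℤ):ℝ) * (2 - q)) := min_le_left _ _
        _ = ((2:ℝ) ^ (-(2 - q))) ^ n := by
            rw [← Real.rpow_natCast ((2:ℝ) ^ (-(2-q))) n, ← Real.rpow_mul (by norm_num)]
            push_cast; ring_nf
    · exact summable_geometric_of_lt_one (Real.rpow_pos_of_pos two_pos _).le
        (Real.rpow_lt_one_of_one_lt_of_neg one_lt_two (by linarith))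

lemma summable_skerTerm {q : ℝ} (hq1 : 0 < q) (hq2 : q < 2) (d : ℝ) :
    Summable (skerTerm q d) :=
  Summable.of_nonneg_of_le (skerTerm_nonneg q d) (skerTerm_le q d)
    (((summable_skerMaj hq1 hq2).mul_left _))

lemma sker_nonneg (q d : ℝ) : 0 ≤ sker q d := tsum_nonneg (skerTerm_nonneg q d)


lemma sker_scale (q d : ℝ) (n : ℤ) :
    sker q ((2:ℝ) ^ ((n:ℤ):ℝ) * d) = (2:ℝ) ^ ((n:ℝ) * q) * sker q d := by
  have key : ∀ k : ℤ, skerTerm q ((2:ℝ) ^ ((n:ℤ):ℝ) * d) k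
      = (2:ℝ) ^ ((n:ℝ) * q) * skerTerm q d (k + n) := by
    intro k
    unfold skerTerm
    have h1 : (2:ℝ) ^ ((k:ℤ):ℝ) * ((2:ℝ) ^ ((n:ℤ):ℝ) * d) = (2:ℝ) ^ (((k+n:ℤ)):ℝ) * d := by
      rw [← mul_assoc, ← Real.rpow_add two_pos]; push_cast; ring_nf
    rw [h1, ← mul_assoc]
    congr 1
    rw [← Real.rpow_add two_pos]
    push_cast; ring_nf
  calc sker q ((2:ℝ) ^ ((n:ℤ):ℝ) * d)
      = ∑' k : ℤ, (2:ℝ) ^ ((n:ℝ) * q) * skerTerm q d (k + n) := by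
        unfold sker; exact tsum_congr key
    _ = ∑' k : ℤ, (2:ℝ) ^ ((n:ℝ) * q) * skerTerm q d k := by
        exact (Equiv.addRight n).tsum_eq fun k => (2:ℝ) ^ ((n:ℝ) * q) * skerTerm q d k
    _ = (2:ℝ) ^ ((n:ℝ) * q) * sker q d := tsum_mul_left

/-- upper bound constant -/
def skerC (q : ℝ) : ℝ := 8 * ∑' k : ℤ, skerMaj q k

lemma skerC_nonneg {q : ℝ} : 0 ≤ skerC q := by
  have : 0 ≤ ∑' k : ℤ, skerMaj q k := tsum_nonneg (skerMaj_nonneg q)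
  unfold skerC; linarith

lemma sker_le_on_interval {q : ℝ} (hq1 : 0 < q) (hq2 : q < 2) {d : ℝ}
    (h1 : 1 ≤ d) (h2 : d ≤ 2) : sker q d ≤ skerC q := by
  have hmax : max 1 (d ^ 2) ≤ 4 := by
    apply max_le (by norm_num); nlinarith
  calc sker q d ≤ ∑' k : ℤ, 2 * max 1 (d ^ 2) * skerMaj q k :=
        Summable.tsum_le_tsum (skerTerm_le q d) (summable_skerTerm hq1 hq2 d)
          ((summable_skerMaj hq1 hq2).mul_left _)
    _ = 2 * max 1 (d ^ 2) * ∑' k : ℤ, skerMaj q k := tsum_mul_left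
    _ ≤ 8 * ∑' k : ℤ, skerMaj q k := by
        have ht : 0 ≤ ∑' k : ℤ, skerMaj q k := tsum_nonneg (skerMaj_nonneg q)
        nlinarith
    _ = skerC q := rfl

lemma le_sker_on_interval {q : ℝ} (hq1 : 0 < q) (hq2 : q < 2) {d : ℝ}
    (h1 : 1 ≤ d) (h2 : d ≤ 2) : 1 - Real.cos 1 ≤ sker q d := by
  have h0 : skerTerm q d 0 = 1 - Real.cos d := by
    unfold skerTerm; norm_num
  have hd : 1 - Real.cos 1 ≤ skerTerm q d 0 := by
    rw [h0]
    have : Real.cos d ≤ Real.cos 1 := by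
      apply Real.cos_le_cos_of_nonneg_of_le_pi (by norm_num) _ h1
      have := Real.pi_gt_three; linarith
    linarith
  exact hd.trans (Summable.le_tsum (summable_skerTerm hq1 hq2 d) 0
    fun j _ => skerTerm_nonneg q d j)

lemma sker_even (q d : ℝ) : sker q (-d) = sker q d := by
  unfold sker; apply tsum_congr; intro k
  unfold skerTerm
  rw [mul_neg, Real.cos_neg]


def skerc (q : ℝ) : ℝ := (1 - Real.cos 1) / 2 ^ q

lemma skerc_pos {q : ℝ} : 0 < skerc q := by
  have h1 : Real.cos 1 < 1 := by
    have h := Real.cos_le_one_sub_mul_cos_sq (x := 1)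
      (by rw [abs_one]; linarith [Real.pi_gt_three])
    have hπ : (0:ℝ) < 2 / Real.pi ^ 2 := by positivity
    nlinarith
  have h2 : (0:ℝ) < 2 ^ q := Real.rpow_pos_of_pos two_pos q
  exact div_pos (by linarith) h2

lemma sker_bounds_pos {q : ℝ} (hq1 : 1 ≤ q) (hq2 : q < 2) {d : ℝ} (hd : 0 < d) :
    skerc q * d ^ q ≤ sker q d ∧ sker q d ≤ skerC q * d ^ q := by
  have hq0 : 0 < q := by linarith
  obtain ⟨n, hn1, hn2⟩ := exists_mem_Ico_zpow hd one_lt_two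
  have h2n : (0:ℝ) < (2:ℝ) ^ n := zpow_pos two_pos n
  set t : ℝ := (2:ℝ) ^ (-n) * d with ht
  have hrp : ∀ m : ℤ, (2:ℝ) ^ ((m:ℤ):ℝ) = (2:ℝ) ^ m := fun m => Real.rpow_intCast 2 m
  have hdt : d = (2:ℝ) ^ ((n:ℤ):ℝ) * t := by
    rw [hrp n, ht, ← mul_assoc, ← zpow_add₀ (two_ne_zero (α := ℝ))]
    simp
  have ht1 : 1 ≤ t := by
    rw [ht, zpow_neg, inv_mul_eq_div, le_div_iff₀ h2n]
    linarith
  have ht2 : t ≤ 2 := by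
    rw [ht, zpow_neg]
    rw [inv_mul_le_iff₀ h2n]
    have : (2:ℝ) ^ (n + 1) = 2 ^ n * 2 := by
      rw [zpow_add₀ (two_ne_zero (α := ℝ))]; simp
    calc d ≤ 2 ^ (n+1) := hn2.le
      _ = 2 ^ n * 2 := this
  set A : ℝ := (2:ℝ) ^ ((n:ℝ) * q) with hA
  have hApos : (0:ℝ) < A := Real.rpow_pos_of_pos two_pos _
  have hsd : sker q d = A * sker q t := by
    rw [hdt, sker_scale]
  have hAd : A ≤ d ^ q := by
    have : A = ((2:ℝ) ^ (n:ℝ)) ^ q := by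
      rw [hA, ← Real.rpow_mul (by norm_num)]
    rw [this]
    apply Real.rpow_le_rpow (Real.rpow_pos_of_pos two_pos _).le _ hq0.le
    rw [show ((n:ℝ)) = ((n:ℤ):ℝ) by norm_num, hrp n]
    exact hn1
  have hdA : d ^ q ≤ 2 ^ q * A := by
    have h1 : 2 ^ q * A = ((2:ℝ) ^ ((n:ℝ) + 1)) ^ q := by
      rw [← Real.rpow_mul (by norm_num), hA, ← Real.rpow_add two_pos]
      ring_nf
    rw [h1]
    apply Real.rpow_le_rpow hd.le _ hq0.le
    rw [show ((n:ℝ) + 1) = (((n+1:ℤ)):ℝ) by push_cast; ring, hrp (n+1)]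
    exact hn2.le
  constructor
  · have hst : 1 - Real.cos 1 ≤ sker q t := le_sker_on_interval hq0 hq2 ht1 ht2
    have h2q : (0:ℝ) < 2 ^ q := Real.rpow_pos_of_pos two_pos q
    rw [hsd]
    have hAge : d ^ q / 2 ^ q ≤ A := by
      rw [div_le_iff₀ h2q]; linarith
    calc skerc q * d ^ q = (d ^ q / 2 ^ q) * (1 - Real.cos 1) := by
          unfold skerc; ring
      _ ≤ A * (1 - Real.cos 1) := by
          apply mul_le_mul_of_nonneg_right hAge
          have := Real.cos_le_one 1; linarith [skerc_pos (q := q)]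
      _ ≤ A * sker q t := mul_le_mul_of_nonneg_left hst hApos.le
  · have hst : sker q t ≤ skerC q := sker_le_on_interval hq0 hq2 ht1 ht2
    rw [hsd]
    calc A * sker q t ≤ A * skerC q := mul_le_mul_of_nonneg_left hst hApos.le
      _ ≤ d ^ q * skerC q := mul_le_mul_of_nonneg_right hAd skerC_nonneg
      _ = skerC q * d ^ q := by ring

lemma sker_zero (q : ℝ) : sker q 0 = 0 := by
  unfold sker skerTerm; simp

lemma sker_le {q : ℝ} (hq1 : 1 ≤ q) (hq2 : q < 2) (d : ℝ) :
    sker q d ≤ skerC q * |d| ^ q := by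
  rcases lt_trichotomy d 0 with hd | hd | hd
  · rw [← sker_even, abs_of_neg hd]
    exact (sker_bounds_pos hq1 hq2 (neg_pos.mpr hd)).2
  · subst hd; simp [sker_zero, Real.zero_rpow (by linarith : q ≠ 0)]
  · rw [abs_of_pos hd]; exact (sker_bounds_pos hq1 hq2 hd).2

lemma le_sker {q : ℝ} (hq1 : 1 ≤ q) (hq2 : q < 2) (d : ℝ) :
    skerc q * |d| ^ q ≤ sker q d := by
  rcases lt_trichotomy d 0 with hd | hd | hd
  · rw [← sker_even, abs_of_neg hd]
    exact (sker_bounds_pos hq1 hq2 (neg_pos.mpr hd)).1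
  · subst hd; simp [sker_zero, Real.zero_rpow (by linarith : q ≠ 0)]
  · rw [abs_of_pos hd]; exact (sker_bounds_pos hq1 hq2 hd).1
/-- the embedding coordinates -/
def phiFun (q : ℝ) (u : ℕ → ℝ) : ℕ × ℤ × Bool → ℝ := fun j =>
  (2:ℝ) ^ (-(j.2.1:ℝ) * q / 2) *
    (if j.2.2 then Real.sin ((2:ℝ) ^ ((j.2.1:ℤ):ℝ) * u j.1)
     else Real.cos ((2:ℝ) ^ ((j.2.1:ℤ):ℝ) * u j.1) - 1)

lemma cos_sin_sq (a b : ℝ) :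
    (Real.cos a - Real.cos b) ^ 2 + (Real.sin a - Real.sin b) ^ 2
      = 2 * (1 - Real.cos (a - b)) := by
  have h1 := Real.sin_sq_add_cos_sq a
  have h2 := Real.sin_sq_add_cos_sq b
  have h3 := Real.cos_sub a b
  nlinarith [h3]

lemma phi_pair_sq (q : ℝ) (u v : ℕ → ℝ) (i : ℕ) (k : ℤ) :
    (phiFun q u (i, k, false) - phiFun q v (i, k, false)) ^ 2
      + (phiFun q u (i, k, true) - phiFun q v (i, k, true)) ^ 2
      = 2 * skerTerm q (u i - v i) k := by
  unfold phiFun skerTerm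
  simp only [if_true, if_false, Bool.false_eq_true]
  set w : ℝ := (2:ℝ) ^ (-(k:ℝ) * q / 2) with hw
  set a : ℝ := (2:ℝ) ^ ((k:ℤ):ℝ) * u i with ha
  set b : ℝ := (2:ℝ) ^ ((k:ℤ):ℝ) * v i with hb
  have hw2 : w ^ 2 = (2:ℝ) ^ (-(k:ℝ) * q) := by
    rw [hw, ← Real.rpow_natCast ((2:ℝ) ^ (-(k:ℝ) * q / 2)) 2,
      ← Real.rpow_mul (by norm_num)]
    norm_num
  have hab : a - b = (2:ℝ) ^ ((k:ℤ):ℝ) * (u i - v i) := by rw [ha, hb]; ring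
  have key := cos_sin_sq a b
  calc (w * (Real.cos a - 1) - w * (Real.cos b - 1)) ^ 2
        + (w * Real.sin a - w * Real.sin b) ^ 2
      = w ^ 2 * ((Real.cos a - Real.cos b) ^ 2 + (Real.sin a - Real.sin b) ^ 2) := by ring
    _ = w ^ 2 * (2 * (1 - Real.cos (a - b))) := by rw [key]
    _ = 2 * ((2:ℝ) ^ (-(k:ℝ) * q) * (1 - Real.cos ((2:ℝ) ^ ((k:ℤ):ℝ) * (u i - v i)))) := by
        rw [hw2, hab]; ring

lemma phi_sq_nonneg (q : ℝ) (u v : ℕ → ℝ) :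
    ∀ j, 0 ≤ (phiFun q u j - phiFun q v j) ^ 2 := fun _ => sq_nonneg _

/-- summability over the bool+scale fiber, and its sum -/
lemma phi_fiber (q : ℝ) (hq1 : 1 ≤ q) (hq2 : q < 2) (u v : ℕ → ℝ) (i : ℕ) :
    Summable (fun z : ℤ × Bool => (phiFun q u (i, z) - phiFun q v (i, z)) ^ 2)
      ∧ ∑' z : ℤ × Bool, (phiFun q u (i, z) - phiFun q v (i, z)) ^ 2
        = 2 * sker q (u i - v i) := by
  have hq0 : (0:ℝ) < q := by linarith
  have hb : ∀ k : ℤ, ∑' b : Bool, (phiFun q u (i, k, b) - phiFun q v (i, k, b)) ^ 2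
      = 2 * skerTerm q (u i - v i) k := by
    intro k
    rw [tsum_fintype]
    rw [Fintype.sum_bool]
    rw [← phi_pair_sq q u v i k]
    ring
  have hsum : Summable (fun z : ℤ × Bool => (phiFun q u (i, z) - phiFun q v (i, z)) ^ 2) := by
    rw [summable_prod_of_nonneg (fun z => sq_nonneg _)]
    refine ⟨fun k => Summable.of_finite, ?_⟩
    simp only [hb]
    exact (summable_skerTerm hq0 hq2 _).mul_left 2
  refine ⟨hsum, ?_⟩
  rw [Summable.tsum_prod' hsum (fun k => Summable.of_finite)]
  calc ∑' k : ℤ, ∑' b : Bool, (phiFun q u (i, k, b) - phiFun q v (i, k, b)) ^ 2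
      = ∑' k : ℤ, 2 * skerTerm q (u i - v i) k := tsum_congr hb
    _ = 2 * sker q (u i - v i) := tsum_mul_left

lemma phi_main (q : ℝ) (hq1 : 1 ≤ q) (hq2 : q < 2) (u v : ℕ → ℝ)
    (hs : Summable fun i => |u i - v i| ^ q) :
    Summable (fun j : ℕ × ℤ × Bool => (phiFun q u j - phiFun q v j) ^ 2)
      ∧ ∑' j : ℕ × ℤ × Bool, (phiFun q u j - phiFun q v j) ^ 2
        = 2 * ∑' i : ℕ, sker q (u i - v i) := by
  have hfib := fun i => phi_fiber q hq1 hq2 u v i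
  have hsker : Summable (fun i => sker q (u i - v i)) := by
    apply Summable.of_nonneg_of_le (fun i => sker_nonneg q _)
      (fun i => sker_le hq1 hq2 (u i - v i)) (hs.mul_left _)
  have hsum : Summable (fun j : ℕ × ℤ × Bool => (phiFun q u j - phiFun q v j) ^ 2) := by
    rw [summable_prod_of_nonneg (fun j => sq_nonneg _)]
    refine ⟨fun i => (hfib i).1, ?_⟩
    simp only [fun i => (hfib i).2]
    exact hsker.mul_left 2
  refine ⟨hsum, ?_⟩
  rw [Summable.tsum_prod' hsum (fun i => (hfib i).1)]
  calc ∑' i : ℕ, ∑' z : ℤ × Bool, (phiFun q u (i, z) - phiFun q v (i, z)) ^ 2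
      = ∑' i : ℕ, 2 * sker q (u i - v i) := tsum_congr (fun i => (hfib i).2)
    _ = 2 * ∑' i : ℕ, sker q (u i - v i) := tsum_mul_left

lemma phiFun_zero (q : ℝ) : phiFun q (fun _ => 0) = fun _ => 0 := by
  funext j
  unfold phiFun
  simp

lemma norm_rpow_two (r : ℝ) : ‖r‖ ^ (2:ℝ≥0∞).toReal = r ^ 2 := by
  rw [ENNReal.toReal_ofNat, Real.norm_eq_abs, show ((2:ℝ)) = ((2:ℕ):ℝ) by norm_num,
    Real.rpow_natCast, sq_abs]

lemma mem_l2 {q : ℝ} (hq1 : 1 ≤ q) (hq2 : q < 2) (u : ℕ → ℝ)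
    (hu : Summable fun i => |u i| ^ q) (e : ℕ ≃ ℕ × ℤ × Bool) :
    Memℓp (fun n => phiFun q u (e n)) 2 := by
  apply memℓp_gen
  have h0 : Summable fun i => |u i - (fun _ => (0:ℝ)) i| ^ q := by simpa using hu
  have hS := (phi_main q hq1 hq2 u (fun _ => 0) h0).1
  simp only [phiFun_zero, sub_zero] at hS
  have hS2 : Summable fun n => (phiFun q u (e n)) ^ 2 :=
    (e.summable_iff (f := fun j => (phiFun q u j) ^ 2)).2 hS
  exact hS2.congr fun n => (norm_rpow_two _).symm


theorem coarseEmbeddable_l2_of_lp {X : Type*} [MetricSpace X]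
    (p : ℝ≥0∞) [Fact (1 ≤ p)] (hp2 : p < 2)
    (f : X → lp (fun _ : ℕ => ℝ) p) (hf : IsCoarseEmbedding f) :
    ∃ g : X → lp (fun _ : ℕ => ℝ) 2, IsCoarseEmbedding g := by
  classical
  set q : ℝ := p.toReal with hqdef
  have hptop : p ≠ ∞ := hp2.ne_top
  have hq1 : 1 ≤ q := by
    have h := Fact.out (p := 1 ≤ p)
    rw [← ENNReal.toReal_one]
    exact ENNReal.toReal_mono hptop h
  have hq2 : q < 2 := by
    rw [show (2:ℝ) = (2:ℝ≥0∞).toReal by simp]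
    exact ENNReal.toReal_strict_mono (by simp) hp2
  have hq0 : (0:ℝ) < q := by linarith
  have hden : Denumerable (ℕ × ℤ × Bool) := Denumerable.ofEncodableOfInfinite _
  let e : ℕ ≃ ℕ × ℤ × Bool := (hden.eqv (ℕ × ℤ × Bool)).symm
  -- summability of coordinates of lp elements
  have habs : ∀ u : lp (fun _ : ℕ => ℝ) p, Summable fun i => |u i| ^ q := by
    intro u
    have := (memℓp_gen_iff (by rwa [← hqdef] : 0 < p.toReal)).1 (lp.memℓp u)
    exact this.congr fun i => by rw [Real.norm_eq_abs]
  have hmem : ∀ x : X, Memℓp (fun n => phiFun q (f x) (e n)) 2 := fun x =>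
    mem_l2 hq1 hq2 (f x) (habs (f x)) e
  refine ⟨fun x => ⟨fun n => phiFun q (f x) (e n), hmem x⟩, ?_⟩
  obtain ⟨ρ₁, ρ₂, hm1, hm2, hb, ht⟩ := hf
  set g : X → lp (fun _ : ℕ => ℝ) 2 := fun x => ⟨fun n => phiFun q (f x) (e n), hmem x⟩
    with hg
  -- key distance formula
  have key : ∀ x y : X,
      dist (g x) (g y) ^ 2 = 2 * ∑' i : ℕ, sker q (f x i - f y i) ∧
      Summable (fun i => |f x i - f y i| ^ q) ∧
      dist (f x) (f y) ^ q = ∑' i : ℕ, |f x i - f y i| ^ q := by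
    intro x y
    have hcoords : ∀ i : ℕ, (f x - f y : lp (fun _ : ℕ => ℝ) p) i = f x i - f y i := by
      intro i; rw [lp.coeFn_sub]; rfl
    have hsumd : Summable fun i => |f x i - f y i| ^ q := by
      have := (memℓp_gen_iff (by rwa [← hqdef] : 0 < p.toReal)).1 (lp.memℓp (f x - f y))
      exact this.congr fun i => by rw [hcoords i, Real.norm_eq_abs]
    have hNq : dist (f x) (f y) ^ q = ∑' i : ℕ, |f x i - f y i| ^ q := by
      rw [dist_eq_norm, lp.norm_rpow_eq_tsum (by rwa [← hqdef] : 0 < p.toReal)]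
      exact tsum_congr fun i => by rw [hcoords i, Real.norm_eq_abs]
    have hgcoords : ∀ n : ℕ,
        (g x - g y : lp (fun _ : ℕ => ℝ) 2) n = phiFun q (f x) (e n) - phiFun q (f y) (e n) := by
      intro n; rw [lp.coeFn_sub]; rfl
    have hmain := phi_main q hq1 hq2 (f x) (f y) hsumd
    have hD : dist (g x) (g y) ^ 2 = 2 * ∑' i : ℕ, sker q (f x i - f y i) := by
      have h2 : ‖(g x - g y : lp (fun _ : ℕ => ℝ) 2)‖ ^ (2:ℝ≥0∞).toReal
          = ∑' n : ℕ, ‖(g x - g y : lp (fun _ : ℕ => ℝ) 2) n‖ ^ (2:ℝ≥0∞).toReal :=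
        lp.norm_rpow_eq_tsum (by rw [ENNReal.toReal_ofNat]; norm_num) _
      have h3 : ∑' n : ℕ, ‖(g x - g y : lp (fun _ : ℕ => ℝ) 2) n‖ ^ (2:ℝ≥0∞).toReal
          = ∑' n : ℕ, (phiFun q (f x) (e n) - phiFun q (f y) (e n)) ^ 2 :=
        tsum_congr fun n => by rw [norm_rpow_two, hgcoords n]
      have h4 : ∑' n : ℕ, (phiFun q (f x) (e n) - phiFun q (f y) (e n)) ^ 2
          = ∑' j : ℕ × ℤ × Bool, (phiFun q (f x) j - phiFun q (f y) j) ^ 2 :=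
        e.tsum_eq (fun j => (phiFun q (f x) j - phiFun q (f y) j) ^ 2)
      have h5 : ‖(g x - g y : lp (fun _ : ℕ => ℝ) 2)‖ ^ (2:ℝ≥0∞).toReal
          = ‖(g x - g y : lp (fun _ : ℕ => ℝ) 2)‖ ^ 2 := by
        rw [ENNReal.toReal_ofNat, show ((2:ℝ)) = ((2:ℕ):ℝ) by norm_num,
          Real.rpow_natCast]
      rw [dist_eq_norm, ← h5, h2, h3, h4, hmain.2]
    exact ⟨hD, hsumd, hNq⟩
  -- bounds relating dist g to dist f
  have hub : ∀ x y : X,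
      dist (g x) (g y) ^ 2 ≤ 2 * skerC q * dist (f x) (f y) ^ q := by
    intro x y
    obtain ⟨hD, hsumd, hNq⟩ := key x y
    have hsker : Summable (fun i => sker q (f x i - f y i)) :=
      Summable.of_nonneg_of_le (fun i => sker_nonneg q _)
        (fun i => sker_le hq1 hq2 _) (hsumd.mul_left _)
    have h1 : ∑' i : ℕ, sker q (f x i - f y i)
        ≤ ∑' i : ℕ, skerC q * |f x i - f y i| ^ q :=
      Summable.tsum_le_tsum (fun i => sker_le hq1 hq2 _) hsker (hsumd.mul_left _)
    rw [hD, hNq]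
    rw [tsum_mul_left] at h1
    nlinarith [h1]
  have hlb : ∀ x y : X,
      2 * skerc q * dist (f x) (f y) ^ q ≤ dist (g x) (g y) ^ 2 := by
    intro x y
    obtain ⟨hD, hsumd, hNq⟩ := key x y
    have hsker : Summable (fun i => sker q (f x i - f y i)) :=
      Summable.of_nonneg_of_le (fun i => sker_nonneg q _)
        (fun i => sker_le hq1 hq2 _) (hsumd.mul_left _)
    have h1 : ∑' i : ℕ, skerc q * |f x i - f y i| ^ q
        ≤ ∑' i : ℕ, sker q (f x i - f y i) :=
      Summable.tsum_le_tsum (fun i => le_sker hq1 hq2 _) (hsumd.mul_left _) hsker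
    rw [hD, hNq]
    rw [tsum_mul_left] at h1
    nlinarith [h1]
  -- construct the control functions
  refine ⟨fun t => Real.sqrt (2 * skerc q * max (ρ₁ t) 0 ^ q),
    fun t => Real.sqrt (2 * skerC q * max (ρ₂ t) 0 ^ q), ?_, ?_, ?_, ?_⟩
  · intro a ha b hb hab
    apply Real.sqrt_le_sqrt
    apply mul_le_mul_of_nonneg_left _ (by linarith [skerc_pos (q := q)])
    exact Real.rpow_le_rpow (le_max_right _ _)
      (max_le_max (hm1 ha hb hab) le_rfl) hq0.le
  · intro a ha b hb hab
    apply Real.sqrt_le_sqrt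
    apply mul_le_mul_of_nonneg_left _ (by linarith [skerC_nonneg (q := q)])
    exact Real.rpow_le_rpow (le_max_right _ _)
      (max_le_max (hm2 ha hb hab) le_rfl) hq0.le
  · intro x y
    obtain ⟨hb1, hb2⟩ := hb x y
    constructor
    · have hmx : max (ρ₁ (dist x y)) 0 ≤ dist (f x) (f y) := max_le hb1 dist_nonneg
      have h1 : 2 * skerc q * max (ρ₁ (dist x y)) 0 ^ q
          ≤ 2 * skerc q * dist (f x) (f y) ^ q := by
        apply mul_le_mul_of_nonneg_left _ (by linarith [skerc_pos (q := q)])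
        exact Real.rpow_le_rpow (le_max_right _ _) hmx hq0.le
      calc Real.sqrt (2 * skerc q * max (ρ₁ (dist x y)) 0 ^ q)
          ≤ Real.sqrt (dist (g x) (g y) ^ 2) :=
            Real.sqrt_le_sqrt (h1.trans (hlb x y))
        _ = dist (g x) (g y) := Real.sqrt_sq dist_nonneg
    · have hmx : dist (f x) (f y) ≤ max (ρ₂ (dist x y)) 0 := hb2.trans (le_max_left _ _)
      have h1 : 2 * skerC q * dist (f x) (f y) ^ q
          ≤ 2 * skerC q * max (ρ₂ (dist x y)) 0 ^ q := by
        apply mul_le_mul_of_nonneg_left _ (by linarith [skerC_nonneg (q := q)])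
        exact Real.rpow_le_rpow dist_nonneg hmx hq0.le
      calc dist (g x) (g y) = Real.sqrt (dist (g x) (g y) ^ 2) :=
            (Real.sqrt_sq dist_nonneg).symm
        _ ≤ Real.sqrt (2 * skerC q * max (ρ₂ (dist x y)) 0 ^ q) :=
            Real.sqrt_le_sqrt ((hub x y).trans h1)
  · have h1 : Tendsto (fun t => max (ρ₁ t) 0) atTop atTop :=
      tendsto_atTop_mono (fun t => le_max_left _ _) ht
    have h2 : Tendsto (fun t => max (ρ₁ t) 0 ^ q) atTop atTop :=
      (tendsto_rpow_atTop hq0).comp h1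
    have h3 : Tendsto (fun t => 2 * skerc q * max (ρ₁ t) 0 ^ q) atTop atTop :=
      h2.const_mul_atTop (by linarith [skerc_pos (q := q)])
    have hsqrt : Tendsto Real.sqrt atTop atTop :=
      (tendsto_rpow_atTop (by norm_num : (0:ℝ) < 1/2)).congr
        fun x => (Real.sqrt_eq_rpow x).symm
    exact hsqrt.comp h3
end CoarseAux
end

section
/- If X is a metric space with an at most countable c-net C for some c > 0 (i.e., every point of X is within distance c of some point of C), and X admits a coarse embedding into some real Hilbert space, then X admits a coarse embedding into the separable Hilbert space ℓ². -/
open Filter MeasureTheory TopologicalSpace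

noncomputable section CoarseAux

lemma aux_orthonormal_countable {E : Type*} [NormedAddCommGroup E] [InnerProductSpace ℝ E]
    [SeparableSpace E] {w : Set E} (hw : Orthonormal ℝ ((↑) : w → E)) : Countable w := by
  apply Pairwise.countable_of_isOpen_disjoint (s := fun i : w => Metric.ball (i : E) (1/2))
  · intro i j hij
    simp only [Function.onFun]
    rw [Set.disjoint_left]
    intro z hzi hzj
    simp only [Metric.mem_ball] at hzi hzj
    have hd : dist (i : E) (j : E) < 1 := by
      calc dist (i : E) j ≤ dist (z : E) i + dist z j := dist_triangle_left _ _ _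
      _ < 1 := by linarith
    have h2 : ‖(i : E) - j‖ ^ 2 = 2 := by
      have hii := hw.1 i
      have hjj := hw.1 j
      have hij0 : (inner ℝ (i : E) (j : E) : ℝ) = 0 := hw.2 hij
      rw [norm_sub_sq_real, hii, hjj, hij0]; ring
    rw [dist_eq_norm] at hd
    nlinarith [norm_nonneg ((i : E) - j)]
  · intro i; exact Metric.isOpen_ball
  · intro i; exact Metric.nonempty_ball.2 (by norm_num)

lemma aux_single_orthonormal {ι : Type*} (e : ι → ℕ) (he : Function.Injective e) :
    Orthonormal ℝ (fun i : ι => lp.single (E := fun _ : ℕ => ℝ) 2 (e i) (1 : ℝ)) := by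
  classical
  rw [orthonormal_iff_ite]
  intro i j
  rw [lp.inner_single_left]
  by_cases h : i = j
  · subst h; simp [lp.single_apply]
  · rw [lp.single_apply, Pi.single_apply, if_neg (fun hh : e i = e j => h (he hh)), if_neg h]
    simp

lemma aux_exists_isometry (E : Type*) [NormedAddCommGroup E] [InnerProductSpace ℝ E]
    [CompleteSpace E] [SeparableSpace E] :
    Nonempty (E →ₗᵢ[ℝ] lp (fun _ : ℕ => ℝ) 2) := by
  obtain ⟨w, b, hb⟩ := exists_hilbertBasis ℝ E
  have hw : Orthonormal ℝ ((↑) : w → E) := hb ▸ b.orthonormal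
  have : Countable w := aux_orthonormal_countable hw
  obtain ⟨e, he⟩ := Countable.exists_injective_nat w
  have hon := aux_single_orthonormal e he
  exact ⟨(hon.orthogonalFamily.linearIsometry).comp b.repr.toLinearIsometry⟩

end CoarseAux

theorem coarseEmbeddable_l2_of_countable_net {X : Type*} [MetricSpace X]
    (c : ℝ) (hc : 0 < c) (C : Set X) (hC : C.Countable)
    (hnet : ∀ x : X, ∃ y ∈ C, dist x y ≤ c)
    (h : ∃ (H : Type) (_ : NormedAddCommGroup H) (_ : InnerProductSpace ℝ H)
      (_ : CompleteSpace H) (f : X → H), IsCoarseEmbedding f) :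
    ∃ g : X → lp (fun _ : ℕ => ℝ) 2, IsCoarseEmbedding g := by
  classical
  obtain ⟨H, _, _, _, f, ρ₁, ρ₂, hρ₁m, hρ₂m, hf, hρ₁t⟩ := h
  set K : Submodule ℝ H := (Submodule.span ℝ (f '' C)).topologicalClosure with hK
  haveI : CompleteSpace K := inferInstance
  haveI hKsep : SeparableSpace K := by
    have h1 : IsSeparable ((Submodule.span ℝ (f '' C) : Submodule ℝ H) : Set H) :=
      (hC.image f).isSeparable.span
    have h2 : IsSeparable (K : Set H) := by
      rw [hK, Submodule.topologicalClosure_coe]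
      exact h1.closure
    exact h2.separableSpace
  obtain ⟨T⟩ := aux_exists_isometry K
  set P := K.orthogonalProjectionOnto with hP
  -- distance from f x to its projection is at most ρ₂ c
  have hproj : ∀ x : X, ‖f x - (P (f x) : H)‖ ≤ ρ₂ c := by
    intro x
    obtain ⟨y, hyC, hyd⟩ := hnet x
    have hfy : f y ∈ K :=
      (Submodule.le_topologicalClosure _) (Submodule.subset_span ⟨y, hyC, rfl⟩)
    have hmin : ‖f x - (P (f x) : H)‖ ≤ ‖f x - f y‖ := by
      rw [hP, ← Submodule.starProjection_apply, Submodule.starProjection_minimal]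
      exact ciInf_le ⟨0, fun r ⟨v, hv⟩ => hv ▸ norm_nonneg _⟩ (⟨f y, hfy⟩ : K)
    refine hmin.trans ?_
    have := (hf x y).2
    rw [dist_eq_norm] at this
    exact this.trans (hρ₂m (Set.mem_Ici.2 dist_nonneg) (Set.mem_Ici.2 hc.le) hyd)
  refine ⟨fun x => T (P (f x)), fun t => ρ₁ t - 2 * ρ₂ c, ρ₂,
    fun a ha b hb hab => sub_le_sub_right (hρ₁m ha hb hab) _, hρ₂m, ?_, ?_⟩
  · intro x y
    have hTd : dist (T (P (f x))) (T (P (f y))) = dist (P (f x) : H) (P (f y) : H) := by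
      rw [T.dist_map, Subtype.dist_eq]
    constructor
    · rw [hTd]
      show ρ₁ (dist x y) - 2 * ρ₂ c ≤ dist (P (f x) : H) (P (f y) : H)
      have tri : dist (f x) (f y) ≤ ‖f x - (P (f x) : H)‖ +
          dist (P (f x) : H) (P (f y) : H) + ‖f y - (P (f y) : H)‖ := by
        rw [dist_eq_norm, dist_eq_norm]
        have : f x - f y = (f x - P (f x)) + ((P (f x) : H) - P (f y)) + ((P (f y) : H) - f y) := by
          abel
        rw [this]
        refine (norm_add_le _ _).trans ?_
        have := norm_add_le (f x - (P (f x) : H)) ((P (f x) : H) - P (f y))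
        rw [norm_sub_rev (P (f y) : H) (f y)]
        linarith
      have h1 := (hf x y).1
      have h2 := hproj x
      have h3 := hproj y
      linarith
    · rw [hTd]
      have : dist (P (f x) : H) (P (f y) : H) ≤ dist (f x) (f y) := by
        rw [dist_eq_norm, dist_eq_norm]
        have hsub : (P (f x) : H) - (P (f y) : H) = ((P (f x) - P (f y) : K) : H) := rfl
        rw [hsub, ← map_sub]
        calc ‖(P (f x - f y) : H)‖ = ‖P (f x - f y)‖ := rfl
        _ ≤ ‖P‖ * ‖f x - f y‖ := P.le_opNorm _
        _ ≤ 1 * ‖f x - f y‖ :=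
            mul_le_mul_of_nonneg_right (Submodule.orthogonalProjectionOnto_norm_le K) (norm_nonneg _)
        _ = ‖f x - f y‖ := one_mul _
      exact this.trans (hf x y).2
  · simpa [sub_eq_add_neg] using tendsto_atTop_add_const_right atTop (-(2 * ρ₂ c)) hρ₁t
end
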